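/- arXiv:1310.6302 — 7 statements merged into one kernel-verified Lean document; each statement's English description precedes it below -/
import Mathlib

section
/- If E : (0,∞) → ℂ satisfies |E(λ)| ≲ (λ log λ)⁻² and |E'(λ)| ≲ λ⁻¹(λ log λ)⁻² for 0 < λ < 1/2, and χ is a smooth cutoff supported in [0,1/2] with χ = 1 near 0, then for all t > 2, |∫₀^∞ e^{itλ²} λ χ(λ) E(λ) dλ| ≲ 1/log t. -/
open MeasureTheory Real Set

lemma logint {a : ℝ} (ha : 0 < a) (ha2 : a ≤ 1/2) :
    IntegrableOn (fun x => (x * (Real.log x)^2)⁻¹) (Ioc 0 a) ∧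
    ∫ x in Ioc 0 a, (x * (Real.log x)^2)⁻¹ = -(Real.log a)⁻¹ := by
  set F : ℝ → ℝ := fun x => -(Real.log x)⁻¹ with hF
  set g : ℝ → ℝ := fun x => (x * (Real.log x)^2)⁻¹ with hg
  have hderiv : ∀ x ∈ Ioo (0:ℝ) a, HasDerivAt F (g x) x := by
    intro x hx
    have hx0 : x ≠ 0 := ne_of_gt hx.1
    have hx1 : x < 1 := lt_of_lt_of_le (lt_of_lt_of_le hx.2 ha2) (by norm_num)
    have hlog : Real.log x ≠ 0 := ne_of_lt (Real.log_neg hx.1 hx1)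
    have h := ((Real.hasDerivAt_log hx0).inv hlog).neg
    refine h.congr_deriv ?_
    simp only [hg]
    field_simp
  have hcont : ContinuousOn F (Icc 0 a) := by
    intro x hx
    rcases eq_or_ne x 0 with rfl | hx0
    · have h1 : Filter.Tendsto F (nhdsWithin 0 (Ioi 0)) (nhds (F 0)) := by
        have h2 : Filter.Tendsto (fun x => -Real.log x) (nhdsWithin (0:ℝ) (Ioi 0)) Filter.atTop :=
          Filter.tendsto_neg_atTop_iff.mpr Real.tendsto_log_nhdsGT_zero
        have h3 := h2.inv_tendsto_atTop
        have : F 0 = 0 := by simp [hF, Real.log_zero]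
        rw [this]
        refine h3.congr (fun y => ?_)
        simp [hF]
      have h4 : ContinuousWithinAt F (Ici 0) 0 :=
        continuousWithinAt_Ioi_iff_Ici.mp h1
      exact h4.mono (Icc_subset_Ici_self)
    · have hxpos : 0 < x := hx.1.lt_of_ne (Ne.symm hx0)
      have hx1 : x < 1 := lt_of_le_of_lt hx.2 (lt_of_le_of_lt ha2 (by norm_num))
      have hlog : Real.log x ≠ 0 := ne_of_lt (Real.log_neg hxpos hx1)
      exact (((Real.continuousAt_log hx0).inv₀ hlog).neg).continuousWithinAt
  have hpos : ∀ x ∈ Ioo (0:ℝ) a, 0 ≤ g x := by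
    intro x hx; have := hx.1; positivity
  have hint : IntegrableOn g (Ioc 0 a) :=
    intervalIntegral.integrableOn_deriv_of_nonneg hcont hderiv hpos
  refine ⟨hint, ?_⟩
  have hii : IntervalIntegrable g volume 0 a := by
    rw [intervalIntegrable_iff_integrableOn_Ioc_of_le ha.le]; exact hint
  have := intervalIntegral.integral_eq_sub_of_hasDeriv_right_of_le ha.le hcont
    (fun x hx => (hderiv x hx).hasDerivWithinAt) hii
  rw [intervalIntegral.integral_of_le ha.le] at this
  rw [this]
  simp [hF, Real.log_zero]

lemma cubeint {a b : ℝ} (ha : 0 < a) (hab : a ≤ b) :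
    ∫ x in a..b, (x^3)⁻¹ = (a^2)⁻¹/2 - (b^2)⁻¹/2 := by
  have hderiv : ∀ x ∈ uIcc a b, HasDerivAt (fun y : ℝ => -(y^2)⁻¹/2) ((x^3)⁻¹) x := by
    intro x hx
    rw [uIcc_of_le hab] at hx
    have hx0 : x ≠ 0 := ne_of_gt (lt_of_lt_of_le ha hx.1)
    have h := (((hasDerivAt_pow 2 x).inv (pow_ne_zero 2 hx0)).neg).div_const 2
    refine h.congr_deriv ?_
    field_simp
    ring
  have hcont : ContinuousOn (fun x : ℝ => (x^3)⁻¹) (uIcc a b) := by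
    apply ContinuousOn.inv₀
    · fun_prop
    · intro x hx
      rw [uIcc_of_le hab] at hx
      have : 0 < x := lt_of_lt_of_le ha hx.1
      positivity
  rw [intervalIntegral.integral_eq_sub_of_hasDerivAt hderiv (hcont.intervalIntegrable)]
  ring

set_option maxHeartbeats 2000000 in
/-- If `E` satisfies `|E(λ)| ≲ (λ log λ)⁻²` and `|E'(λ)| ≲ λ⁻¹(λ log λ)⁻²` on `(0,1/2)`,
and `χ` is a smooth cutoff equal to `1` on `[0,1/4)` and `0` on `(1/2,∞)`, then
`|∫₀^∞ e^{itλ²} λ χ(λ) E(λ) dλ| ≲ 1/log t` for `t > 2`. -/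
theorem stmt_0 (χ : ℝ → ℝ) (hχ : ContDiff ℝ (⊤ : ℕ∞) χ)
    (hχ1 : ∀ x : ℝ, x < 1/4 → χ x = 1) (hχ0 : ∀ x : ℝ, 1/2 < x → χ x = 0)
    (E E' : ℝ → ℂ) (hE : ∀ x ∈ Ioi (0:ℝ), HasDerivAt E (E' x) x)
    (C₁ : ℝ)
    (hEb : ∀ x : ℝ, 0 < x → x < 1/2 → ‖E x‖ ≤ C₁ / (x * Real.log x) ^ 2)
    (hE'b : ∀ x : ℝ, 0 < x → x < 1/2 → ‖E' x‖ ≤ C₁ / (x * (x * Real.log x) ^ 2)) :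
    ∃ C : ℝ, ∀ t : ℝ, 2 < t →
      ‖∫ x in Ioi (0:ℝ),
          Complex.exp (Complex.I * t * x ^ 2) * x * χ x * E x‖ ≤ C / Real.log t := by
  -- bound on χ and deriv χ
  obtain ⟨M0, hM0⟩ := (isCompact_Icc : IsCompact (Icc (0:ℝ) 1)).exists_bound_of_continuousOn
    hχ.continuous.continuousOn
  obtain ⟨M1, hM1⟩ := (isCompact_Icc : IsCompact (Icc (0:ℝ) 1)).exists_bound_of_continuousOn
    (hχ.continuous_deriv (by simp)).continuousOn
  set M := max (max M0 M1) 1 with hM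
  have hM1' : (1:ℝ) ≤ M := le_max_right _ _
  have hMpos : (0:ℝ) < M := lt_of_lt_of_le one_pos hM1'
  have hχb : ∀ x, |χ x| ≤ M := by
    intro x
    rcases lt_or_ge x (1/4) with h | h
    · rw [hχ1 x h]; simpa using hM1'
    rcases le_or_gt x (1/2) with h2 | h2
    · calc |χ x| ≤ M0 := hM0 x ⟨by linarith, by linarith⟩
        _ ≤ M := le_trans (le_max_left _ _) (le_max_left _ _)
    · rw [hχ0 x h2]; simp [hMpos.le]
  have hχ'b : ∀ x, |deriv χ x| ≤ M := by
    intro x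
    rcases lt_or_ge x (1/4) with h | h
    · have he : χ =ᶠ[nhds x] (fun _ => (1:ℝ)) :=
        Filter.eventuallyEq_of_mem (Iio_mem_nhds h) (fun y hy => hχ1 y hy)
      rw [he.deriv_eq, deriv_const]
      simp [hMpos.le]
    rcases le_or_gt x (1/2) with h2 | h2
    · calc |deriv χ x| ≤ M1 := hM1 x ⟨by linarith, by linarith⟩
        _ ≤ M := le_trans (le_max_right _ _) (le_max_left _ _)
    · have he : χ =ᶠ[nhds x] (fun _ => (0:ℝ)) :=
        Filter.eventuallyEq_of_mem (Ioi_mem_nhds h2) (fun y hy => hχ0 y hy)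
      rw [he.deriv_eq, deriv_const]
      simp [hMpos.le]
  -- C₁ ≥ 0
  have hC₁ : 0 ≤ C₁ := by
    by_contra hneg
    push_neg at hneg
    have h1 := hEb (1/4) (by norm_num) (by norm_num)
    have hd : (0:ℝ) < ((1/4 : ℝ) * Real.log (1/4))^2 := by
      have : Real.log (1/4 : ℝ) ≠ 0 := ne_of_lt (Real.log_neg (by norm_num) (by norm_num))
      positivity
    have h2 : C₁ / ((1/4 : ℝ) * Real.log (1/4))^2 < 0 := div_neg_of_neg_of_pos hneg hd
    exact absurd (le_trans (norm_nonneg _) h1) (by linarith)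
  have hMC : 0 ≤ M * C₁ := mul_nonneg hMpos.le hC₁
  clear_value M
  -- continuity of E on Ioi 0
  have hχc : Continuous χ := hχ.continuous
  have hdχc : Continuous (deriv χ) := hχ.continuous_deriv (by simp)
  have hEc : ContinuousOn E (Ioi 0) := fun x hx => (hE x hx).continuousAt.continuousWithinAt
  -- norm of the oscillatory factor
  have hexp : ∀ (t y : ℝ), ‖Complex.exp (Complex.I * t * y^2)‖ = 1 := by
    intro t y
    rw [Complex.norm_exp]
    have : (Complex.I * t * (y:ℂ)^2).re = 0 := by
      simp [Complex.mul_re, Complex.mul_im, ← Complex.ofReal_pow]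
    rw [this, Real.exp_zero]
  -- pointwise bound on integrand
  have hfb : ∀ (t x : ℝ), 0 < x → x < 1/2 →
      ‖Complex.exp (Complex.I * t * x ^ 2) * x * χ x * E x‖ ≤ M * C₁ * (x * (Real.log x)^2)⁻¹ := by
    intro t x hx0 hx2
    have hlog : Real.log x ≠ 0 := ne_of_lt (Real.log_neg hx0 (by linarith))
    calc ‖Complex.exp (Complex.I * t * x ^ 2) * x * χ x * E x‖
        = ‖Complex.exp (Complex.I * t * x ^ 2)‖ * ‖(x:ℂ)‖ * ‖((χ x : ℝ) : ℂ)‖ * ‖E x‖ := by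
          rw [norm_mul, norm_mul, norm_mul]
      _ = 1 * x * |χ x| * ‖E x‖ := by
          rw [hexp, Complex.norm_real, Real.norm_eq_abs, Complex.norm_real, Real.norm_eq_abs,
            abs_of_pos hx0]
      _ ≤ 1 * x * M * (C₁ / (x * Real.log x)^2) := by
          have h1 : 1 * x * |χ x| ≤ 1 * x * M := by
            have := hχb x; nlinarith
          exact mul_le_mul h1 (hEb x hx0 hx2) (norm_nonneg _) (by positivity)
      _ = M * C₁ * (x * (Real.log x)^2)⁻¹ := by
          field_simp
  -- reduction to Ioc 0 (1/2)
  have hred : ∀ t : ℝ, (∫ x in Ioi (0:ℝ), Complex.exp (Complex.I * t * x ^ 2) * x * χ x * E x)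
      = ∫ x in Ioc (0:ℝ) (1/2), Complex.exp (Complex.I * t * x ^ 2) * x * χ x * E x := by
    intro t
    have heq : EqOn (fun x : ℝ => Complex.exp (Complex.I * t * x ^ 2) * x * χ x * E x)
        ((Ioc (0:ℝ) (1/2)).indicator
          (fun x : ℝ => Complex.exp (Complex.I * t * x ^ 2) * x * χ x * E x)) (Ioi 0) := by
      intro x hx
      rcases le_or_gt x (1/2) with h | h
      · have hmem : x ∈ Ioc (0:ℝ) (1/2) := ⟨hx, h⟩
        rw [Set.indicator_apply, if_pos hmem]
      · have hmem : x ∉ Ioc (0:ℝ) (1/2) := fun hc => (not_le_of_gt h) hc.2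
        rw [Set.indicator_apply, if_neg hmem]
        simp [hχ0 x h]
    rw [setIntegral_congr_fun measurableSet_Ioi heq, setIntegral_indicator measurableSet_Ioc,
      inter_eq_right.mpr Ioc_subset_Ioi_self]
  -- near-origin bound, for any 0 < a ≤ 1/2
  have hnear : ∀ (t a : ℝ), 0 < a → a ≤ 1/2 →
      ‖∫ x in Ioc (0:ℝ) a, Complex.exp (Complex.I * t * x ^ 2) * x * χ x * E x‖
        ≤ M * C₁ * (-(Real.log a)⁻¹) := by
    intro t a ha ha2
    obtain ⟨hgint, hgval⟩ := logint ha ha2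
    rw [integral_Ioc_eq_integral_Ioo]
    have hgint' : IntegrableOn (fun x => M * C₁ * (x * (Real.log x)^2)⁻¹) (Ioo 0 a) :=
      (hgint.mono_set Ioo_subset_Ioc_self).const_mul _
    have hb : ∀ᵐ (x : ℝ) ∂(volume.restrict (Ioo 0 a)),
        ‖Complex.exp (Complex.I * t * x ^ 2) * x * χ x * E x‖ ≤ M * C₁ * (x * (Real.log x)^2)⁻¹ := by
      rw [ae_restrict_iff' measurableSet_Ioo]
      exact ae_of_all _ (fun x hx => hfb t x hx.1 (lt_of_lt_of_le hx.2 ha2))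
    calc ‖∫ x in Ioo (0:ℝ) a, Complex.exp (Complex.I * t * x ^ 2) * x * χ x * E x‖
        ≤ ∫ x in Ioo (0:ℝ) a, M * C₁ * (x * (Real.log x)^2)⁻¹ :=
          norm_integral_le_of_norm_le hgint' hb
      _ = M * C₁ * ∫ x in Ioo (0:ℝ) a, (x * (Real.log x)^2)⁻¹ := integral_const_mul _ _
      _ = M * C₁ * (-(Real.log a)⁻¹) := by rw [← integral_Ioc_eq_integral_Ioo, hgval]
  -- integrability of the integrand on Ioc 0 a for 0 < a ≤ 1/2
  have hfint : ∀ (t a : ℝ), 0 < a → a ≤ 1/2 →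
      IntegrableOn (fun x : ℝ => Complex.exp (Complex.I * t * x ^ 2) * x * χ x * E x)
        (Ioc 0 a) := by
    intro t a ha ha2
    obtain ⟨hgint, _⟩ := logint ha ha2
    have hfc : ContinuousOn (fun x : ℝ => Complex.exp (Complex.I * t * x ^ 2) * x * χ x * E x)
        (Ioi 0) := by
      apply ContinuousOn.mul ?_ hEc
      apply Continuous.continuousOn
      fun_prop
    rw [integrableOn_Ioc_iff_integrableOn_Ioo]
    refine Integrable.mono' ((hgint.mono_set Ioo_subset_Ioc_self).const_mul (M * C₁))
      ((hfc.mono (fun x hx => hx.1)).aestronglyMeasurable measurableSet_Ioo) ?_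
    rw [ae_restrict_iff' measurableSet_Ioo]
    exact ae_of_all _ (fun x hx => hfb t x hx.1 (lt_of_lt_of_le hx.2 ha2))

  -- continuity of the integrand
  have hfcont : ∀ t : ℝ, ContinuousOn
      (fun x : ℝ => Complex.exp (Complex.I * t * x ^ 2) * x * χ x * E x) (Ioi 0) := by
    intro t
    apply ContinuousOn.mul ?_ hEc
    apply Continuous.continuousOn
    fun_prop
  have hlog2pos : (0:ℝ) < Real.log 2 := Real.log_pos one_lt_two
  have hlog2sq : ((Real.log 2)^2)⁻¹ ≤ 3 := by
    have h9 := Real.log_two_gt_d9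
    rw [inv_le_comm₀ _ (by norm_num)]
    · nlinarith
    · positivity
  -- χ vanishes at 1/2
  have hχhalf : χ (1/2:ℝ) = 0 := by
    have h1 : Filter.Tendsto χ (nhdsWithin (1/2:ℝ) (Ioi (1/2))) (nhds (χ (1/2))) :=
      (hχc.continuousAt).continuousWithinAt
    have h2 : Filter.Tendsto χ (nhdsWithin (1/2:ℝ) (Ioi (1/2))) (nhds 0) := by
      refine Filter.Tendsto.congr' ?_ tendsto_const_nhds
      filter_upwards [self_mem_nhdsWithin] with y hy using (hχ0 y hy).symm
    exact tendsto_nhds_unique h1 h2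
  -- pointwise bound on v'
  have hv'b : ∀ x : ℝ, 0 < x → x < 1/2 →
      ‖((deriv χ x : ℝ) : ℂ) * E x + (χ x : ℂ) * E' x‖ ≤ 2*M*C₁ * (x^3 * (Real.log x)^2)⁻¹ := by
    intro x hx0 hx2
    have hlog : Real.log x ≠ 0 := ne_of_lt (Real.log_neg hx0 (by linarith))
    have hx1 : x ≤ 1 := by linarith
    have e1 : ‖((deriv χ x : ℝ) : ℂ) * E x‖ ≤ M * (C₁ / (x * Real.log x)^2) := by
      rw [norm_mul, Complex.norm_real, Real.norm_eq_abs]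
      exact mul_le_mul (hχ'b x) (hEb x hx0 hx2) (norm_nonneg _) hMpos.le
    have e2 : ‖(χ x : ℂ) * E' x‖ ≤ M * (C₁ / (x * (x * Real.log x)^2)) := by
      rw [norm_mul, Complex.norm_real, Real.norm_eq_abs]
      exact mul_le_mul (hχb x) (hE'b x hx0 hx2) (norm_nonneg _) hMpos.le
    have k1 : C₁ / (x * Real.log x)^2 ≤ C₁ / (x^3 * (Real.log x)^2) := by
      gcongr
      · nlinarith [sq_nonneg (Real.log x), pow_pos hx0 2, pow_pos hx0 3]
    have k2 : x * (x * Real.log x)^2 = x^3 * (Real.log x)^2 := by ring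
    calc ‖((deriv χ x : ℝ) : ℂ) * E x + (χ x : ℂ) * E' x‖
        ≤ ‖((deriv χ x : ℝ) : ℂ) * E x‖ + ‖(χ x : ℂ) * E' x‖ := norm_add_le _ _
      _ ≤ M * (C₁ / (x^3 * (Real.log x)^2)) + M * (C₁ / (x^3 * (Real.log x)^2)) := by
          refine add_le_add (e1.trans ?_) (e2.trans ?_)
          · exact mul_le_mul_of_nonneg_left k1 hMpos.le
          · rw [k2]
      _ = 2*M*C₁ * (x^3 * (Real.log x)^2)⁻¹ := by rw [div_eq_mul_inv]; ring
  refine ⟨32 * M * C₁, fun t ht => ?_⟩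
  have ht0 : (0:ℝ) < t := by linarith
  have hLpos : 0 < Real.log t := Real.log_pos (by linarith)
  rw [hred t]
  rcases le_or_gt t 16 with h16 | h16
  · -- easy range 2 < t ≤ 16
    have h := hnear t (1/2) (by norm_num) le_rfl
    have hlh : Real.log (1/2 : ℝ) = -Real.log 2 := by
      rw [show (1/2 : ℝ) = 2⁻¹ by norm_num, Real.log_inv]
    rw [hlh] at h
    refine h.trans ?_
    have hlt : Real.log t ≤ 4 * Real.log 2 := by
      calc Real.log t ≤ Real.log 16 := Real.log_le_log ht0 h16
        _ = 4 * Real.log 2 := by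
          rw [show (16:ℝ) = 2^4 by norm_num, Real.log_pow]; push_cast; ring
    have e0 : M * C₁ * (-(-Real.log 2)⁻¹) = M * C₁ * (Real.log 2)⁻¹ := by
      rw [inv_neg, neg_neg]
    rw [e0, le_div_iff₀ hLpos]
    calc M * C₁ * (Real.log 2)⁻¹ * Real.log t
        ≤ M * C₁ * (Real.log 2)⁻¹ * (4 * Real.log 2) := by
          apply mul_le_mul_of_nonneg_left hlt
          positivity
      _ = 4 * (M * C₁) := by field_simp
      _ ≤ 32 * M * C₁ := by nlinarith
  · -- main range t > 16
    set L := Real.log t with hLdef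
    have hL1 : 1 < L := by
      rw [hLdef, ← Real.exp_lt_exp, Real.exp_log ht0]
      calc Real.exp 1 < 2.7182818286 := Real.exp_one_lt_d9
        _ < t := by linarith
    set S := t ^ (-(1/4) : ℝ) with hSdef
    have hS0 : 0 < S := Real.rpow_pos_of_pos ht0 _
    have hlogS : Real.log S = -(1/4) * L := by rw [hSdef, Real.log_rpow ht0]
    have hS4 : S^4 * t = 1 := by
      rw [hSdef, ← Real.rpow_natCast (t ^ (-(1/4):ℝ)) 4, ← Real.rpow_mul ht0.le]
      norm_num
      rw [Real.rpow_neg_one]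
      field_simp
    have hS4' : S^4 = t⁻¹ := by
      field_simp
      linarith [hS4]
    have hS2 : S < 1/2 := by
      have h1 : S^4 < (1/2:ℝ)^4 := by
        rw [hS4', show ((1:ℝ)/2)^4 = (16:ℝ)⁻¹ by norm_num]
        exact inv_strictAnti₀ (by norm_num) h16
      exact lt_of_pow_lt_pow_left₀ 4 (by norm_num) h1
    set A := S^2 with hAdef
    have hA0 : 0 < A := by positivity
    have hAS : A < S := by nlinarith
    have hA4 : A < 1/4 := by nlinarith
    have hlogA : Real.log A = -(1/2) * L := by
      rw [hAdef, Real.log_pow, hlogS]; push_cast; ring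
    have hA2t : A^2 = t⁻¹ := by rw [hAdef, ← hS4']; ring
    have hb2 : A ≤ (1/2:ℝ) := by linarith
    have hSle : S ≤ 4 / L := by
      have h1 : L/4 ≤ S⁻¹ := by
        have h2 := Real.log_le_sub_one_of_pos (inv_pos.mpr hS0)
        rw [Real.log_inv, hlogS] at h2
        have h3 : 0 < S⁻¹ := inv_pos.mpr hS0
        linarith
      have h4 : (S⁻¹)⁻¹ ≤ (L/4)⁻¹ := by
        apply inv_anti₀ (by linarith) h1
      rw [inv_inv] at h4
      calc S ≤ (L/4)⁻¹ := h4
        _ = 4 / L := by rw [inv_div]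
    clear_value L S A
    -- split the integral
    have hint1 := hfint t A hA0 hb2
    have hint2 : IntegrableOn (fun x : ℝ => Complex.exp (Complex.I * t * x ^ 2) * x * χ x * E x)
        (Ioc A (1/2)) := by
      apply IntegrableOn.mono_set ?_ Ioc_subset_Icc_self
      exact (((hfcont t).mono (fun x hx => lt_of_lt_of_le hA0 hx.1)).integrableOn_Icc)
    have hsplit : (∫ x in Ioc (0:ℝ) (1/2), Complex.exp (Complex.I * t * x ^ 2) * x * χ x * E x)
        = (∫ x in Ioc (0:ℝ) A, Complex.exp (Complex.I * t * x ^ 2) * x * χ x * E x)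
          + ∫ x in Ioc A (1/2:ℝ), Complex.exp (Complex.I * t * x ^ 2) * x * χ x * E x := by
      rw [← setIntegral_union (Ioc_disjoint_Ioc_of_le le_rfl) measurableSet_Ioc hint1 hint2,
        Ioc_union_Ioc_eq_Ioc hA0.le hb2]
    -- integration by parts on [A, 1/2]
    have hu : ∀ x ∈ uIcc A (1/2:ℝ),
        HasDerivAt (fun y : ℝ => Complex.exp (Complex.I * t * y^2))
          (((2*t*x : ℝ) : ℂ) * Complex.I * Complex.exp (Complex.I * t * x^2)) x := by
      intro x _
      have h1 : HasDerivAt (fun z : ℂ => Complex.I * t * z^2) (Complex.I * t * (2*x)) (x:ℂ) := by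
        simpa using (hasDerivAt_pow 2 (x:ℂ)).const_mul (Complex.I * (t:ℂ))
      have h2 := (h1.cexp).comp_ofReal
      convert h2 using 1
      push_cast
      ring
    have hv : ∀ x ∈ uIcc A (1/2:ℝ), HasDerivAt (fun y : ℝ => (χ y : ℂ) * E y)
        (((deriv χ x : ℝ) : ℂ) * E x + (χ x : ℂ) * E' x) x := by
      intro x hx
      rw [uIcc_of_le hb2] at hx
      have hx0 : (0:ℝ) < x := lt_of_lt_of_le hA0 hx.1
      have hχd : HasDerivAt χ (deriv χ x) x := (hχ.differentiable (by simp) x).hasDerivAt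
      exact (hχd.ofReal_comp).mul (hE x hx0)
    have hu'int : IntervalIntegrable
        (fun x : ℝ => ((2*t*x : ℝ) : ℂ) * Complex.I * Complex.exp (Complex.I * t * x^2))
        volume A (1/2) := by
      apply Continuous.intervalIntegrable
      fun_prop
    have hg3cont : ∀ p q : ℝ, 0 < p → q ≤ 1/2 →
        ContinuousOn (fun x : ℝ => (x^3 * (Real.log x)^2)⁻¹) (Icc p q) := by
      intro p q hp hq
      apply ContinuousOn.inv₀
      · apply ContinuousOn.mul (by fun_prop)
        apply ContinuousOn.pow
        exact Real.continuousOn_log.mono (fun x hx => ne_of_gt (lt_of_lt_of_le hp hx.1))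
      · intro x hx
        have hx0 : 0 < x := lt_of_lt_of_le hp hx.1
        have hxlog : Real.log x ≠ 0 :=
          ne_of_lt (Real.log_neg hx0 (lt_of_le_of_lt (hx.2.trans hq) (by norm_num)))
        positivity
    have hv'int : IntervalIntegrable
        (fun x : ℝ => ((deriv χ x : ℝ) : ℂ) * E x + (χ x : ℂ) * E' x) volume A (1/2) := by
      rw [intervalIntegrable_iff_integrableOn_Ioc_of_le hb2,
        integrableOn_Ioc_iff_integrableOn_Ioo]
      have hgi0 : IntegrableOn (fun x : ℝ => 2*M*C₁ * (x^3 * (Real.log x)^2)⁻¹) (Icc A (1/2)) :=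
        ((hg3cont A (1/2) hA0 le_rfl).integrableOn_Icc).const_mul _
      have hgi := hgi0.mono_set Ioo_subset_Icc_self
      refine Integrable.mono' hgi ?_ ?_
      · apply AEStronglyMeasurable.add
        · apply ContinuousOn.aestronglyMeasurable ?_ measurableSet_Ioo
          exact ContinuousOn.mul ((Complex.continuous_ofReal.comp hdχc).continuousOn)
            (hEc.mono (fun x hx => hx.1.trans' hA0))
        · apply AEStronglyMeasurable.mul
          · exact (Complex.continuous_ofReal.comp hχc).aestronglyMeasurable.restrict
          · have hmE : AEStronglyMeasurable (deriv E) (volume.restrict (Ioo A (1/2))) :=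
              (measurable_deriv E).aestronglyMeasurable.restrict
            refine hmE.congr ?_
            rw [Filter.EventuallyEq, ae_restrict_iff' measurableSet_Ioo]
            exact ae_of_all _ (fun x hx => (hE x (lt_of_lt_of_le hA0 hx.1.le)).deriv)
      · rw [ae_restrict_iff' measurableSet_Ioo]
        exact ae_of_all _ (fun x hx => hv'b x (lt_of_lt_of_le hA0 hx.1.le) hx.2)
    have hIBP := intervalIntegral.integral_mul_deriv_eq_deriv_mul hu hv hu'int hv'int
    simp only [hχhalf, Complex.ofReal_zero, zero_mul, mul_zero, zero_sub] at hIBP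
    -- hIBP : ∫ uv' = -(uA*vA) - ∫ u'v
    have h4 : (∫ x in A..(1/2:ℝ),
          ((2*t*x : ℝ) : ℂ) * Complex.I * Complex.exp (Complex.I * t * x^2) * ((χ x : ℂ) * E x))
        = -(Complex.exp (Complex.I * t * A^2) * ((χ A : ℂ) * E A))
          - ∫ x in A..(1/2:ℝ), Complex.exp (Complex.I * t * x^2)
              * (((deriv χ x : ℝ) : ℂ) * E x + (χ x : ℂ) * E' x) := by
      linear_combination hIBP
    have hc0 : (((2*t:ℝ):ℂ) * Complex.I) ≠ 0 := by
      exact mul_ne_zero (Complex.ofReal_ne_zero.mpr (by positivity)) Complex.I_ne_zero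
    have hkey : (∫ x in Ioc A (1/2:ℝ), Complex.exp (Complex.I * t * x ^ 2) * x * χ x * E x)
        = (((2*t:ℝ):ℂ) * Complex.I)⁻¹ * ∫ x in A..(1/2:ℝ),
            ((2*t*x : ℝ) : ℂ) * Complex.I * Complex.exp (Complex.I * t * x^2)
              * ((χ x : ℂ) * E x) := by
      rw [← intervalIntegral.integral_of_le hb2, ← intervalIntegral.integral_const_mul]
      apply intervalIntegral.integral_congr
      intro x hx
      rw [eq_inv_mul_iff_mul_eq₀ hc0]
      push_cast
      ring
    -- boundary term bound
    have hBA : ‖Complex.exp (Complex.I * t * A^2) * ((χ A : ℂ) * E A)‖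
        ≤ M * (C₁ / (A * Real.log A)^2) := by
      rw [norm_mul, hexp t A, one_mul, norm_mul, Complex.norm_real, Real.norm_eq_abs]
      exact mul_le_mul (hχb A) (hEb A hA0 (by linarith)) (norm_nonneg _) hMpos.le
    -- bound on the remaining integral
    have hintAS : IntervalIntegrable (fun x : ℝ => (x^3 * (Real.log x)^2)⁻¹) volume A S := by
      apply ContinuousOn.intervalIntegrable
      rw [uIcc_of_le hAS.le]
      exact hg3cont A S hA0 (by linarith)
    have hintS2 : IntervalIntegrable (fun x : ℝ => (x^3 * (Real.log x)^2)⁻¹) volume S (1/2) := by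
      apply ContinuousOn.intervalIntegrable
      rw [uIcc_of_le hS2.le]
      exact hg3cont S (1/2) hS0 le_rfl
    have hJ1 : ‖∫ x in A..(1/2:ℝ), Complex.exp (Complex.I * t * x^2)
          * (((deriv χ x : ℝ) : ℂ) * E x + (χ x : ℂ) * E' x)‖
        ≤ |∫ x in A..(1/2:ℝ), 2*M*C₁ * (x^3 * (Real.log x)^2)⁻¹| := by
      apply intervalIntegral.norm_integral_le_abs_of_norm_le ?_ ?_
      · rw [uIoc_of_le hb2]
        have hhalfae : ∀ᵐ (x:ℝ) ∂(volume.restrict (Ioc A (1/2:ℝ))), x ≠ (1/2:ℝ) := by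
          apply ae_restrict_of_ae
          have hset : {x : ℝ | ¬ x ≠ (1/2:ℝ)} = {(1/2:ℝ)} := by ext y; simp
          rw [ae_iff, hset]
          exact measure_singleton _
        filter_upwards [ae_restrict_mem measurableSet_Ioc, hhalfae] with x hx hxne
        have hx2 : x < 1/2 := lt_of_le_of_ne hx.2 hxne
        have hx0 : 0 < x := lt_of_lt_of_le hA0 hx.1.le
        calc ‖Complex.exp (Complex.I * t * x^2)
              * (((deriv χ x : ℝ) : ℂ) * E x + (χ x : ℂ) * E' x)‖
            = ‖((deriv χ x : ℝ) : ℂ) * E x + (χ x : ℂ) * E' x‖ := by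
              rw [norm_mul, hexp, one_mul]
          _ ≤ 2*M*C₁ * (x^3 * (Real.log x)^2)⁻¹ := hv'b x hx0 hx2
      · apply ContinuousOn.intervalIntegrable
        rw [uIcc_of_le hb2]
        exact continuousOn_const.mul (hg3cont A (1/2) hA0 le_rfl)
    have habs : |∫ x in A..(1/2:ℝ), 2*M*C₁ * (x^3 * (Real.log x)^2)⁻¹|
        = ∫ x in A..(1/2:ℝ), 2*M*C₁ * (x^3 * (Real.log x)^2)⁻¹ := by
      apply abs_of_nonneg
      apply intervalIntegral.integral_nonneg hb2
      intro x hx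
      have hx0 : 0 < x := lt_of_lt_of_le hA0 hx.1
      positivity
    have hsplitJ : (∫ x in A..(1/2:ℝ), 2*M*C₁ * (x^3 * (Real.log x)^2)⁻¹)
        = 2*M*C₁ * ((∫ x in A..S, (x^3 * (Real.log x)^2)⁻¹)
            + ∫ x in S..(1/2:ℝ), (x^3 * (Real.log x)^2)⁻¹) := by
      rw [intervalIntegral.integral_const_mul,
        ← intervalIntegral.integral_add_adjacent_intervals hintAS hintS2]
    have hp1 : (∫ x in A..S, (x^3 * (Real.log x)^2)⁻¹) ≤ 8*t/L^2 := by
      have hmono : (∫ x in A..S, (x^3 * (Real.log x)^2)⁻¹)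
          ≤ ∫ x in A..S, (16/L^2) * (x^3)⁻¹ := by
        apply intervalIntegral.integral_mono_on hAS.le hintAS ?_ ?_
        · apply ContinuousOn.intervalIntegrable
          apply continuousOn_const.mul
          apply ContinuousOn.inv₀ (by fun_prop)
          intro x hx
          rw [uIcc_of_le hAS.le] at hx
          have : 0 < x := lt_of_lt_of_le hA0 hx.1
          positivity
        · intro x hx
          have hx0 : 0 < x := lt_of_lt_of_le hA0 hx.1
          have hlx : Real.log x ≤ -(1/4) * L := by
            rw [← hlogS]; exact Real.log_le_log hx0 hx.2
          have hsq : (L/4)^2 ≤ (Real.log x)^2 := by nlinarith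
          have h1 : ((Real.log x)^2)⁻¹ ≤ 16/L^2 := by
            rw [show (16:ℝ)/L^2 = ((L/4)^2)⁻¹ by
              rw [div_pow]; rw [inv_div]; norm_num]
            exact inv_anti₀ (by positivity) hsq
          calc (x^3 * (Real.log x)^2)⁻¹ = (x^3)⁻¹ * ((Real.log x)^2)⁻¹ := by rw [mul_inv]
            _ ≤ (x^3)⁻¹ * (16/L^2) := by
                apply mul_le_mul_of_nonneg_left h1 (by positivity)
            _ = 16/L^2 * (x^3)⁻¹ := by ring
      have hval : (∫ x in A..S, (16/L^2) * (x^3)⁻¹)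
          = (16/L^2) * ((A^2)⁻¹/2 - (S^2)⁻¹/2) := by
        rw [intervalIntegral.integral_const_mul, cubeint hA0 hAS.le]
      calc (∫ x in A..S, (x^3 * (Real.log x)^2)⁻¹)
          ≤ (16/L^2) * ((A^2)⁻¹/2 - (S^2)⁻¹/2) := hmono.trans_eq hval
        _ ≤ (16/L^2) * ((A^2)⁻¹/2) := by
            apply mul_le_mul_of_nonneg_left ?_ (by positivity)
            have : (0:ℝ) < (S^2)⁻¹ := by positivity
            linarith
        _ = 8*t/L^2 := by rw [hA2t, inv_inv]; ring
    have hp2 : (∫ x in S..(1/2:ℝ), (x^3 * (Real.log x)^2)⁻¹)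
        ≤ (1/2) * (S^3 * (Real.log 2)^2)⁻¹ := by
      have hmono : (∫ x in S..(1/2:ℝ), (x^3 * (Real.log x)^2)⁻¹)
          ≤ ∫ _x in S..(1/2:ℝ), (S^3 * (Real.log 2)^2)⁻¹ := by
        apply intervalIntegral.integral_mono_on hS2.le hintS2 intervalIntegrable_const
        intro x hx
        have hx0 : 0 < x := lt_of_lt_of_le hS0 hx.1
        have hl : Real.log x ≤ -Real.log 2 := by
          have h5 := Real.log_le_log hx0 hx.2
          rwa [show Real.log (1/2:ℝ) = -Real.log 2 by rw [one_div, Real.log_inv]] at h5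
        have h2 : (Real.log 2)^2 ≤ (Real.log x)^2 := by nlinarith
        have h3 : S^3 ≤ x^3 := pow_le_pow_left₀ hS0.le hx.1 3
        apply inv_anti₀ (by positivity)
        exact mul_le_mul h3 h2 (by positivity) (by positivity)
      have hval : (∫ _x in S..(1/2:ℝ), (S^3 * (Real.log 2)^2)⁻¹)
          = (1/2 - S) * (S^3 * (Real.log 2)^2)⁻¹ := by
        rw [intervalIntegral.integral_const, smul_eq_mul]
      calc (∫ x in S..(1/2:ℝ), (x^3 * (Real.log x)^2)⁻¹)
          ≤ (1/2 - S) * (S^3 * (Real.log 2)^2)⁻¹ := hmono.trans_eq hval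
        _ ≤ (1/2) * (S^3 * (Real.log 2)^2)⁻¹ := by
            apply mul_le_mul_of_nonneg_right ?_ (by positivity)
            linarith
    -- assemble far bound
    have hALA : (A * Real.log A)^2 = L^2/(4*t) := by
      rw [mul_pow, hlogA, hA2t]
      field_simp
      ring
    have hS3 : (S^3)⁻¹ = S * t := by
      apply inv_eq_of_mul_eq_one_right
      calc S^3 * (S*t) = S^4 * t := by ring
        _ = 1 := hS4
    have hfar : ‖∫ x in Ioc A (1/2:ℝ), Complex.exp (Complex.I * t * x ^ 2) * x * χ x * E x‖
        ≤ 16*M*C₁/L := by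
      rw [hkey, norm_mul]
      have hcnorm : ‖((((2*t:ℝ)):ℂ) * Complex.I)⁻¹‖ = (2*t)⁻¹ := by
        rw [norm_inv, norm_mul, Complex.norm_I, mul_one, Complex.norm_real, Real.norm_eq_abs,
          abs_of_pos (by linarith)]
      rw [hcnorm]
      have hstep : ‖∫ x in A..(1/2:ℝ),
            ((2*t*x : ℝ) : ℂ) * Complex.I * Complex.exp (Complex.I * t * x^2)
              * ((χ x : ℂ) * E x)‖
          ≤ M * (C₁ / (A * Real.log A)^2)
            + 2*M*C₁ * (8*t/L^2 + (1/2) * (S^3 * (Real.log 2)^2)⁻¹) := by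
        rw [h4]
        calc ‖-(Complex.exp (Complex.I * t * A^2) * ((χ A : ℂ) * E A))
              - ∫ x in A..(1/2:ℝ), Complex.exp (Complex.I * t * x^2)
                  * (((deriv χ x : ℝ) : ℂ) * E x + (χ x : ℂ) * E' x)‖
            ≤ ‖Complex.exp (Complex.I * t * A^2) * ((χ A : ℂ) * E A)‖
              + ‖∫ x in A..(1/2:ℝ), Complex.exp (Complex.I * t * x^2)
                  * (((deriv χ x : ℝ) : ℂ) * E x + (χ x : ℂ) * E' x)‖ := by
              refine (norm_sub_le _ _).trans ?_
              rw [norm_neg]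
          _ ≤ M * (C₁ / (A * Real.log A)^2)
              + 2*M*C₁ * (8*t/L^2 + (1/2) * (S^3 * (Real.log 2)^2)⁻¹) := by
              refine add_le_add hBA (hJ1.trans ?_)
              rw [habs, hsplitJ]
              exact mul_le_mul_of_nonneg_left (add_le_add hp1 hp2) (by positivity)
      have hterm : (2*t)⁻¹ * (M * (C₁ / (A * Real.log A)^2)
            + 2*M*C₁ * (8*t/L^2 + (1/2) * (S^3 * (Real.log 2)^2)⁻¹))
          = 2*M*C₁/L^2 + 8*M*C₁/L^2 + M*C₁*S*((Real.log 2)^2)⁻¹/2 := by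
        rw [hALA, show (S^3*(Real.log 2)^2)⁻¹ = (S*t) * ((Real.log 2)^2)⁻¹ by
          rw [mul_inv, hS3]]
        have hL0 : L ≠ 0 := ne_of_gt hLpos
        have ht0' : t ≠ 0 := ne_of_gt ht0
        have hlog20 : Real.log 2 ≠ 0 := ne_of_gt hlog2pos
        field_simp
        ring
      calc (2*t)⁻¹ * ‖∫ x in A..(1/2:ℝ),
            ((2*t*x : ℝ) : ℂ) * Complex.I * Complex.exp (Complex.I * t * x^2)
              * ((χ x : ℂ) * E x)‖
          ≤ (2*t)⁻¹ * (M * (C₁ / (A * Real.log A)^2)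
              + 2*M*C₁ * (8*t/L^2 + (1/2) * (S^3 * (Real.log 2)^2)⁻¹)) := by
            apply mul_le_mul_of_nonneg_left hstep (by positivity)
        _ = 2*M*C₁/L^2 + 8*M*C₁/L^2 + M*C₁*S*((Real.log 2)^2)⁻¹/2 := hterm
        _ ≤ 16*M*C₁/L := by
            have hLL : L ≤ L^2 := by nlinarith
            have e1 : 2*M*C₁/L^2 ≤ 2*M*C₁/L := by
              apply div_le_div_of_nonneg_left ?_ hLpos hLL
              positivity
            have e2 : 8*M*C₁/L^2 ≤ 8*M*C₁/L := by
              apply div_le_div_of_nonneg_left ?_ hLpos hLL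
              positivity
            have h4' : S*((Real.log 2)^2)⁻¹ ≤ (4/L)*3 :=
              mul_le_mul hSle hlog2sq (by positivity) (by positivity)
            have e3 : M*C₁*S*((Real.log 2)^2)⁻¹/2 ≤ 6*M*C₁/L := by
              calc M*C₁*S*((Real.log 2)^2)⁻¹/2 = M*C₁*(S*((Real.log 2)^2)⁻¹)/2 := by ring
                _ ≤ M*C₁*((4/L)*3)/2 :=
                    (div_le_div_iff_of_pos_right (by norm_num)).mpr (mul_le_mul_of_nonneg_left h4' hMC)
                _ = 6*M*C₁/L := by field_simp; ring
            calc 2*M*C₁/L^2 + 8*M*C₁/L^2 + M*C₁*S*((Real.log 2)^2)⁻¹/2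
                ≤ 2*M*C₁/L + 8*M*C₁/L + 6*M*C₁/L := add_le_add (add_le_add e1 e2) e3
              _ = 16*M*C₁/L := by ring
    -- combine near and far
    have hnearA := hnear t A hA0 hb2
    have hnearA' : M * C₁ * (-(Real.log A)⁻¹) = 2*M*C₁/L := by
      rw [hlogA]
      field_simp
    rw [hsplit]
    calc ‖(∫ x in Ioc (0:ℝ) A, Complex.exp (Complex.I * t * x ^ 2) * x * χ x * E x)
          + ∫ x in Ioc A (1/2:ℝ), Complex.exp (Complex.I * t * x ^ 2) * x * χ x * E x‖
        ≤ ‖∫ x in Ioc (0:ℝ) A, Complex.exp (Complex.I * t * x ^ 2) * x * χ x * E x‖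
          + ‖∫ x in Ioc A (1/2:ℝ), Complex.exp (Complex.I * t * x ^ 2) * x * χ x * E x‖ :=
          norm_add_le _ _
      _ ≤ 2*M*C₁/L + 16*M*C₁/L := add_le_add (hnearA.trans_eq hnearA') hfar
      _ ≤ 32 * M * C₁ / L := by
          rw [← add_div]
          exact (div_le_div_iff_of_pos_right hLpos).mpr (by nlinarith)
end

section
/- If E : (0,∞) → ℂ satisfies |E(λ)| ≲ (λ log λ)⁻² for 0 < λ < 1/2 and χ is a smooth cutoff supported in [0,1/2] equal to 1 near 0, then for all t > 2, |∫₀^∞ sin(tλ) χ(λ) E(λ) dλ| ≲ t / log t. -/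
open MeasureTheory Real Set Filter Topology intervalIntegral

set_option maxHeartbeats 2000000

lemma aux_logInt {a : ℝ} (h0 : 0 < a) (h1 : a < 1) :
    IntegrableOn (fun x => (x * Real.log x ^ 2)⁻¹) (Ioc 0 a) ∧
    ∫ x in Ioc 0 a, (x * Real.log x ^ 2)⁻¹ = -(Real.log a)⁻¹ := by
  set g : ℝ → ℝ := fun x => -(Real.log x)⁻¹ with hg
  have hderiv : ∀ x ∈ Ioo (0:ℝ) a, HasDerivAt g ((x * Real.log x ^ 2)⁻¹) x := by
    intro x hx
    have hx0 : x ≠ 0 := hx.1.ne'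
    have hlx : Real.log x ≠ 0 := by
      have : Real.log x < 0 := Real.log_neg hx.1 (hx.2.trans h1)
      exact this.ne
    have h := ((Real.hasDerivAt_log hx0).fun_inv hlx).fun_neg
    refine h.congr_deriv ?_
    rw [neg_div, neg_neg, div_eq_mul_inv, mul_inv]
  have htend0 : Tendsto g (𝓝[>] (0:ℝ)) (𝓝 0) := by
    have h1' : Tendsto (fun x => -Real.log x) (𝓝[>] (0:ℝ)) atTop := by
      exact tendsto_neg_atBot_atTop.comp Real.tendsto_log_nhdsGT_zero
    have := h1'.inv_tendsto_atTop
    refine this.congr (fun x => ?_)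
    simp [g]
  have hcont : ContinuousOn g (Icc 0 a) := by
    intro x hx
    rcases eq_or_lt_of_le hx.1 with rfl | hx0
    · have : ContinuousWithinAt g (Ioi (0:ℝ)) 0 := by
        rw [ContinuousWithinAt]
        have : g 0 = 0 := by simp [g]
        rw [this]; exact htend0
      exact ((continuousWithinAt_Ioi_iff_Ici).mp this).mono Icc_subset_Ici_self
    · have hlx : Real.log x ≠ 0 :=
        (Real.log_neg hx0 (lt_of_le_of_lt hx.2 h1)).ne
      exact (((Real.continuousAt_log hx0.ne').inv₀ hlx).neg).continuousWithinAt
  have hpos : ∀ x ∈ Ioo (0:ℝ) a, 0 ≤ (x * Real.log x ^ 2)⁻¹ := by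
    intro x hx
    have h1 : (0:ℝ) ≤ x := hx.1.le
    positivity
  have hint : IntervalIntegrable (fun x => (x * Real.log x ^ 2)⁻¹) volume 0 a := by
    apply intervalIntegrable_deriv_of_nonneg (g := g)
    · rwa [uIcc_of_le h0.le]
    · simpa [h0.le, min_eq_left, max_eq_right] using hderiv
    · simpa [h0.le, min_eq_left, max_eq_right] using hpos
  have htenda : Tendsto g (𝓝[<] a) (𝓝 (g a)) := by
    have hla : Real.log a ≠ 0 := (Real.log_neg h0 h1).ne
    exact (((Real.continuousAt_log h0.ne').inv₀ hla).neg).tendsto.mono_left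
      nhdsWithin_le_nhds
  have hval := integral_eq_sub_of_hasDerivAt_of_tendsto h0 hderiv hint htend0 htenda
  constructor
  · exact hint.1
  · rw [← intervalIntegral.integral_of_le h0.le, hval]
    simp [g]

lemma aux_sqInt {a b : ℝ} (h0 : 0 < a) (hab : a ≤ b) :
    IntegrableOn (fun x => (x ^ 2)⁻¹) (Ioc a b) ∧
    ∫ x in Ioc a b, (x ^ 2)⁻¹ = a⁻¹ - b⁻¹ := by
  have hcont : ContinuousOn (fun x : ℝ => (x ^ 2)⁻¹) (Icc a b) := by
    apply ContinuousOn.inv₀ (by fun_prop)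
    intro x hx
    have : 0 < x := lt_of_lt_of_le h0 hx.1
    positivity
  have hderiv : ∀ x ∈ uIcc a b, HasDerivAt (fun x : ℝ => -x⁻¹) ((x ^ 2)⁻¹) x := by
    intro x hx
    rw [uIcc_of_le hab] at hx
    have hx0 : x ≠ 0 := (lt_of_lt_of_le h0 hx.1).ne'
    simpa using (hasDerivAt_inv hx0).fun_neg
  have hii : IntervalIntegrable (fun x : ℝ => (x ^ 2)⁻¹) volume a b := by
    rw [intervalIntegrable_iff_integrableOn_Ioc_of_le hab]
    exact (hcont.integrableOn_Icc).mono_set Ioc_subset_Icc_self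
  constructor
  · exact hii.1
  · rw [← intervalIntegral.integral_of_le hab,
      integral_eq_sub_of_hasDerivAt hderiv hii]
    ring

/-- If `|E(λ)| ≲ (λ log λ)⁻²` on `(0,1/2)` and `χ` is a smooth cutoff equal to `1` on
`[0,1/4)` and `0` on `(1/2,∞)`, then `|∫₀^∞ sin(tλ) χ(λ) E(λ) dλ| ≲ t/log t` for `t > 2`. -/
theorem stmt_2 (χ : ℝ → ℝ) (hχ : ContDiff ℝ (⊤ : ℕ∞) χ)
    (hχ1 : ∀ x : ℝ, x < 1/4 → χ x = 1) (hχ0 : ∀ x : ℝ, 1/2 < x → χ x = 0)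
    (E : ℝ → ℂ) (hEm : Measurable E)
    (C₁ : ℝ)
    (hEb : ∀ x : ℝ, 0 < x → x < 1/2 → ‖E x‖ ≤ C₁ / (x * Real.log x) ^ 2) :
    ∃ C : ℝ, ∀ t : ℝ, 2 < t →
      ‖∫ x in Ioi (0:ℝ), (Real.sin (t * x) : ℂ) * χ x * E x‖ ≤ C * t / Real.log t := by
  -- χ vanishes at 1/2 by continuity
  have hχhalf : χ (1/2) = 0 := by
    have h1 : Tendsto χ (𝓝[>] (1/2:ℝ)) (𝓝 (χ (1/2))) :=
      (hχ.continuous.tendsto _).mono_left nhdsWithin_le_nhds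
    have h2 : Tendsto χ (𝓝[>] (1/2:ℝ)) (𝓝 0) := by
      apply Tendsto.congr' _ tendsto_const_nhds
      filter_upwards [self_mem_nhdsWithin] with x hx
      exact (hχ0 x hx).symm
    exact tendsto_nhds_unique h1 h2
  obtain ⟨M, hM⟩ := (isCompact_Icc (a := (0:ℝ)) (b := 1/2)).exists_bound_of_continuousOn
      hχ.continuous.continuousOn
  set Mc := max M 0 with hMcdef
  set Cc := max C₁ 0 with hCcdef
  set K := Mc * Cc with hKdef
  have hMc0 : 0 ≤ Mc := le_max_right _ _
  have hCc0 : 0 ≤ Cc := le_max_right _ _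
  have hK0 : 0 ≤ K := mul_nonneg hMc0 hCc0
  have hMc : ∀ x ∈ Icc (0:ℝ) (1/2), |χ x| ≤ Mc := fun x hx =>
    le_trans (by simpa [Real.norm_eq_abs] using hM x hx) (le_max_left _ _)
  have hl2 : 0 < Real.log 2 := Real.log_pos one_lt_two
  refine ⟨K * (1 + 4 / Real.log 2 + 4 / Real.log 2 ^ 2), ?_⟩
  intro t ht
  have ht0 : (0:ℝ) < t := by linarith
  have hlt : 0 < Real.log t := Real.log_pos (by linarith)
  have hl2t : Real.log 2 ≤ Real.log t := (Real.log_le_log two_pos (by linarith))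
  set s := Real.sqrt t with hsdef
  have hs1 : 1 < s := by
    have := Real.sqrt_lt_sqrt (by norm_num : (0:ℝ) ≤ 1) (by linarith : (1:ℝ) < t)
    simpa using this
  have hs0 : 0 < s := by linarith
  have hst : s * s = t := Real.mul_self_sqrt ht0.le
  have hslt : s < t := by nlinarith
  have hlogs : Real.log s = Real.log t / 2 := Real.log_sqrt ht0.le
  set u := min s⁻¹ (1/2 : ℝ) with hudef
  have hu0 : 0 < u := lt_min (by positivity) (by norm_num)
  have ht12 : t⁻¹ < 1/2 := by
    have := inv_strictAnti₀ two_pos ht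
    simpa [one_div] using this
  have hts : t⁻¹ < s⁻¹ := inv_strictAnti₀ hs0 hslt
  have htu : t⁻¹ < u := lt_min hts ht12
  have hu2 : u ≤ 1/2 := min_le_right _ _
  have hus : u ≤ s⁻¹ := min_le_left _ _
  have hti : (0:ℝ) < t⁻¹ := by positivity
  -- the three dominating pieces
  set p1 : ℝ → ℝ := fun x => K * t * (x * Real.log x ^ 2)⁻¹ with hp1def
  set p2 : ℝ → ℝ := fun x => 4 * K / Real.log t ^ 2 * (x ^ 2)⁻¹ with hp2def
  set p3 : ℝ → ℝ := fun x => K / Real.log 2 ^ 2 * (x ^ 2)⁻¹ with hp3def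
  set g : ℝ → ℝ := fun x => (Ioc (0:ℝ) t⁻¹).indicator p1 x
      + (Ioc t⁻¹ u).indicator p2 x + (Ioc u (1/2:ℝ)).indicator p3 x with hgdef
  have hA := aux_logInt hti (by linarith)
  have hB := aux_sqInt hti htu.le
  have hC := aux_sqInt hu0 hu2
  have hi1 : IntegrableOn p1 (Ioc (0:ℝ) t⁻¹) := hA.1.const_mul (K * t)
  have hi2 : IntegrableOn p2 (Ioc t⁻¹ u) := hB.1.const_mul _
  have hi3 : IntegrableOn p3 (Ioc u (1/2:ℝ)) := hC.1.const_mul _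
  have hgi : Integrable g (volume.restrict (Ioi (0:ℝ))) := by
    apply Integrable.add
    apply Integrable.add
    · exact ((integrable_indicator_iff measurableSet_Ioc).2 hi1).restrict
    · exact ((integrable_indicator_iff measurableSet_Ioc).2 hi2).restrict
    · exact ((integrable_indicator_iff measurableSet_Ioc).2 hi3).restrict
  have hp1n : ∀ x ∈ Ioc (0:ℝ) t⁻¹, 0 ≤ p1 x := by
    intro x hx
    have h0 : 0 < x := hx.1
    have : 0 ≤ (x * Real.log x ^ 2)⁻¹ := by positivity
    exact mul_nonneg (mul_nonneg hK0 ht0.le) this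
  have hp2n : ∀ x ∈ Ioc t⁻¹ u, 0 ≤ p2 x := by
    intro x _
    exact mul_nonneg (div_nonneg (by linarith) (by positivity)) (by positivity)
  have hp3n : ∀ x ∈ Ioc u (1/2:ℝ), 0 ≤ p3 x := by
    intro x _
    exact mul_nonneg (div_nonneg hK0 (by positivity)) (by positivity)
  have hgn : ∀ x, 0 ≤ g x := fun x =>
    add_nonneg (add_nonneg (Set.indicator_nonneg hp1n x) (Set.indicator_nonneg hp2n x))
      (Set.indicator_nonneg hp3n x)
  -- pointwise bound
  have hbound : ∀ x ∈ Ioi (0:ℝ), ‖(Real.sin (t * x) : ℂ) * χ x * E x‖ ≤ g x := by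
    intro x hx
    have hx0 : (0:ℝ) < x := hx
    have hnorm : ‖(Real.sin (t * x) : ℂ) * χ x * E x‖
        = |Real.sin (t * x)| * |χ x| * ‖E x‖ := by
      rw [norm_mul, norm_mul, Complex.norm_real, Complex.norm_real,
        Real.norm_eq_abs, Real.norm_eq_abs]
    rcases le_or_gt (1/2 : ℝ) x with hhalf | hhalf
    · have hz : χ x = 0 := by
        rcases eq_or_lt_of_le hhalf with h | h
        · exact h ▸ hχhalf
        · exact hχ0 x h
      have : ‖(Real.sin (t * x) : ℂ) * χ x * E x‖ = 0 := by
        rw [hnorm, hz]; simp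
      rw [this]; exact hgn x
    · have hxne : x ≠ 0 := hx0.ne'
      have hlx : Real.log x < 0 := Real.log_neg hx0 (by linarith)
      have hlne : Real.log x ≠ 0 := hlx.ne
      have hlx2 : 0 < Real.log x ^ 2 := by nlinarith
      have hxlx : (x * Real.log x) ^ 2 = x ^ 2 * Real.log x ^ 2 := by ring
      have hxlxpos : 0 < (x * Real.log x) ^ 2 := by rw [hxlx]; positivity
      have hE : ‖E x‖ ≤ Cc / (x * Real.log x) ^ 2 := by
        refine (hEb x hx0 hhalf).trans ?_
        exact (div_le_div_iff_of_pos_right hxlxpos).mpr (le_max_left _ _)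
      have hchi : |χ x| ≤ Mc := hMc x ⟨hx0.le, by linarith⟩
      have hEn : (0:ℝ) ≤ ‖E x‖ := norm_nonneg _
      rcases le_or_gt x t⁻¹ with h1 | h1
      · -- first region
        have hmem : x ∈ Ioc (0:ℝ) t⁻¹ := ⟨hx0, h1⟩
        have n2 : x ∉ Ioc t⁻¹ u := fun h => absurd h.1 (not_lt.2 h1)
        have n3 : x ∉ Ioc u (1/2:ℝ) := fun h => absurd h.1 (not_lt.2 (h1.trans htu.le))
        have hgx : g x = p1 x := by
          simp only [hgdef, Set.indicator_of_mem hmem, Set.indicator_of_notMem n2,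
            Set.indicator_of_notMem n3, add_zero, zero_add]
        rw [hnorm, hgx]
        have hsin : |Real.sin (t * x)| ≤ t * x := by
          calc |Real.sin (t * x)| ≤ |t * x| := Real.abs_sin_le_abs
          _ = t * x := abs_of_nonneg (by positivity)
        calc |Real.sin (t * x)| * |χ x| * ‖E x‖
            ≤ (t * x) * Mc * (Cc / (x * Real.log x) ^ 2) := by
              apply mul_le_mul _ hE hEn (mul_nonneg (by positivity) hMc0)
              exact mul_le_mul hsin hchi (abs_nonneg _) (by positivity)
          _ = p1 x := by
              show (t * x) * Mc * (Cc / (x * Real.log x) ^ 2)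
                  = K * t * (x * Real.log x ^ 2)⁻¹
              rw [hKdef, hxlx]
              field_simp
      · rcases le_or_gt x u with h2 | h2
        · -- second region
          have hmem : x ∈ Ioc t⁻¹ u := ⟨h1, h2⟩
          have n1 : x ∉ Ioc (0:ℝ) t⁻¹ := fun h => absurd h1 (not_lt.2 h.2)
          have n3 : x ∉ Ioc u (1/2:ℝ) := fun h => absurd h2 (not_le.2 h.1)
          have hgx : g x = p2 x := by
            simp only [hgdef, Set.indicator_of_mem hmem, Set.indicator_of_notMem n1,
              Set.indicator_of_notMem n3, add_zero, zero_add]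
          rw [hnorm, hgx]
          have hlog2 : Real.log t / 2 ≤ -Real.log x := by
            have h3 : Real.log x ≤ Real.log s⁻¹ := Real.log_le_log hx0 (h2.trans hus)
            rw [Real.log_inv, hlogs] at h3
            linarith
          have hlsq : Real.log t ^ 2 ≤ 4 * Real.log x ^ 2 := by
            have h4 : (Real.log t / 2) ^ 2 ≤ (-Real.log x) ^ 2 :=
              pow_le_pow_left₀ (by positivity) hlog2 2
            nlinarith
          calc |Real.sin (t * x)| * |χ x| * ‖E x‖
              ≤ 1 * Mc * (Cc / (x * Real.log x) ^ 2) := by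
                apply mul_le_mul _ hE hEn (mul_nonneg zero_le_one hMc0)
                exact mul_le_mul (Real.abs_sin_le_one _) hchi (abs_nonneg _) zero_le_one
            _ ≤ p2 x := by
                rw [one_mul]
                show Mc * (Cc / (x * Real.log x) ^ 2) ≤ 4 * K / Real.log t ^ 2 * (x ^ 2)⁻¹
                rw [show Mc * (Cc / (x * Real.log x) ^ 2) = K / (x ^ 2 * Real.log x ^ 2) by
                  rw [hKdef, hxlx]; ring]
                rw [show (4 * K / Real.log t ^ 2 * (x ^ 2)⁻¹ : ℝ)
                    = 4 * K / (Real.log t ^ 2 * x ^ 2) by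
                  field_simp]
                rw [div_le_div_iff₀ (by positivity) (by positivity)]
                nlinarith [mul_le_mul_of_nonneg_left hlsq (mul_nonneg hK0 (sq_nonneg x))]
        · -- third region
          have hmem : x ∈ Ioc u (1/2:ℝ) := ⟨h2, by linarith⟩
          have n1 : x ∉ Ioc (0:ℝ) t⁻¹ := fun h => absurd h1 (not_lt.2 h.2)
          have n2 : x ∉ Ioc t⁻¹ u := fun h => absurd h2 (not_lt.2 h.2)
          have hgx : g x = p3 x := by
            simp only [hgdef, Set.indicator_of_mem hmem, Set.indicator_of_notMem n1,
              Set.indicator_of_notMem n2, add_zero, zero_add]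
          rw [hnorm, hgx]
          have hlog2 : Real.log 2 ≤ -Real.log x := by
            have h3 : Real.log x ≤ Real.log (1/2 : ℝ) := Real.log_le_log hx0 (by linarith)
            rw [show (1/2 : ℝ) = 2⁻¹ by norm_num, Real.log_inv] at h3
            linarith
          have hlsq : Real.log 2 ^ 2 ≤ Real.log x ^ 2 := by
            have h4 : Real.log 2 ^ 2 ≤ (-Real.log x) ^ 2 :=
              pow_le_pow_left₀ hl2.le hlog2 2
            nlinarith
          calc |Real.sin (t * x)| * |χ x| * ‖E x‖
              ≤ 1 * Mc * (Cc / (x * Real.log x) ^ 2) := by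
                apply mul_le_mul _ hE hEn (mul_nonneg zero_le_one hMc0)
                exact mul_le_mul (Real.abs_sin_le_one _) hchi (abs_nonneg _) zero_le_one
            _ ≤ p3 x := by
                rw [one_mul]
                show Mc * (Cc / (x * Real.log x) ^ 2) ≤ K / Real.log 2 ^ 2 * (x ^ 2)⁻¹
                rw [show Mc * (Cc / (x * Real.log x) ^ 2) = K / (x ^ 2 * Real.log x ^ 2) by
                  rw [hKdef, hxlx]; ring]
                rw [show (K / Real.log 2 ^ 2 * (x ^ 2)⁻¹ : ℝ)
                    = K / (Real.log 2 ^ 2 * x ^ 2) by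
                  field_simp]
                rw [div_le_div_iff₀ (by positivity) (by positivity)]
                nlinarith [mul_le_mul_of_nonneg_left hlsq (mul_nonneg hK0 (sq_nonneg x))]
  -- compute the integral of g
  have hsub1 : Ioc (0:ℝ) t⁻¹ ⊆ Ioi (0:ℝ) := Ioc_subset_Ioi_self
  have hsub2 : Ioc t⁻¹ u ⊆ Ioi (0:ℝ) := fun x hx => lt_trans hti hx.1
  have hsub3 : Ioc u (1/2:ℝ) ⊆ Ioi (0:ℝ) := fun x hx => lt_trans hu0 hx.1
  have hind : ∀ (a b : ℝ) (p : ℝ → ℝ), Ioc a b ⊆ Ioi (0:ℝ) →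
      ∫ x in Ioi (0:ℝ), (Ioc a b).indicator p x = ∫ x in Ioc a b, p x := by
    intro a b p hsub
    rw [MeasureTheory.integral_indicator measurableSet_Ioc,
      Measure.restrict_restrict measurableSet_Ioc,
      inter_eq_self_of_subset_left hsub]
  have e1 : ∫ x in Ioi (0:ℝ), (Ioc (0:ℝ) t⁻¹).indicator p1 x = K * t * (Real.log t)⁻¹ := by
    rw [hind _ _ _ hsub1]
    simp only [hp1def]
    rw [MeasureTheory.integral_const_mul, hA.2, Real.log_inv]
    rw [inv_neg, neg_neg]
  have e2 : ∫ x in Ioi (0:ℝ), (Ioc t⁻¹ u).indicator p2 x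
      = 4 * K / Real.log t ^ 2 * (t - u⁻¹) := by
    rw [hind _ _ _ hsub2]
    simp only [hp2def]
    rw [MeasureTheory.integral_const_mul, hB.2, inv_inv]
  have e3 : ∫ x in Ioi (0:ℝ), (Ioc u (1/2:ℝ)).indicator p3 x
      = K / Real.log 2 ^ 2 * (u⁻¹ - 2) := by
    rw [hind _ _ _ hsub3]
    simp only [hp3def]
    rw [MeasureTheory.integral_const_mul, hC.2]
    norm_num
  have hgval : ∫ x in Ioi (0:ℝ), g x = K * t * (Real.log t)⁻¹
      + 4 * K / Real.log t ^ 2 * (t - u⁻¹) + K / Real.log 2 ^ 2 * (u⁻¹ - 2) := by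
    have I1 : Integrable ((Ioc (0:ℝ) t⁻¹).indicator p1) (volume.restrict (Ioi (0:ℝ))) :=
      ((integrable_indicator_iff measurableSet_Ioc).2 hi1).restrict
    have I2 : Integrable ((Ioc t⁻¹ u).indicator p2) (volume.restrict (Ioi (0:ℝ))) :=
      ((integrable_indicator_iff measurableSet_Ioc).2 hi2).restrict
    have I3 : Integrable ((Ioc u (1/2:ℝ)).indicator p3) (volume.restrict (Ioi (0:ℝ))) :=
      ((integrable_indicator_iff measurableSet_Ioc).2 hi3).restrict
    have h12 : ∫ x in Ioi (0:ℝ),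
          ((Ioc (0:ℝ) t⁻¹).indicator p1 x + (Ioc t⁻¹ u).indicator p2 x)
        = (∫ x in Ioi (0:ℝ), (Ioc (0:ℝ) t⁻¹).indicator p1 x)
          + ∫ x in Ioi (0:ℝ), (Ioc t⁻¹ u).indicator p2 x :=
      MeasureTheory.integral_add I1 I2
    have h123 : ∫ x in Ioi (0:ℝ), g x
        = (∫ x in Ioi (0:ℝ),
            ((Ioc (0:ℝ) t⁻¹).indicator p1 x + (Ioc t⁻¹ u).indicator p2 x))
          + ∫ x in Ioi (0:ℝ), (Ioc u (1/2:ℝ)).indicator p3 x :=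
      MeasureTheory.integral_add (I1.add I2) I3
    rw [h123, h12, e1, e2, e3]
  -- final arithmetic
  have hub : u⁻¹ ≤ 2 * s := by
    have h1 : (2 * s)⁻¹ ≤ u := by
      apply le_min
      · apply inv_anti₀ hs0
        nlinarith
      · rw [show (1/2 : ℝ) = 2⁻¹ by norm_num]
        apply inv_anti₀ two_pos
        nlinarith
    calc u⁻¹ ≤ ((2 * s)⁻¹)⁻¹ := inv_anti₀ (by positivity) h1
    _ = 2 * s := inv_inv _
  have hlts : Real.log t ≤ 2 * s := by
    have := Real.log_le_sub_one_of_pos hs0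
    rw [hlogs] at this
    linarith
  have hfin : K * t * (Real.log t)⁻¹ + 4 * K / Real.log t ^ 2 * (t - u⁻¹)
      + K / Real.log 2 ^ 2 * (u⁻¹ - 2)
      ≤ K * (1 + 4 / Real.log 2 + 4 / Real.log 2 ^ 2) * t / Real.log t := by
    have hT : (0:ℝ) < t / Real.log t := div_pos ht0 hlt
    have b1 : K * t * (Real.log t)⁻¹ = K * (t / Real.log t) := by
      rw [div_eq_mul_inv, ← mul_assoc]
    have b2 : 4 * K / Real.log t ^ 2 * (t - u⁻¹) ≤ (4 * K / Real.log 2) * (t / Real.log t) := by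
      have step1 : 4 * K / Real.log t ^ 2 * (t - u⁻¹) ≤ 4 * K / Real.log t ^ 2 * t := by
        apply mul_le_mul_of_nonneg_left _ (div_nonneg (by linarith) (by positivity))
        have : (0:ℝ) ≤ u⁻¹ := inv_nonneg.2 hu0.le
        linarith
      have step2 : 4 * K / Real.log t ^ 2 * t = (4 * K / Real.log t) * (t / Real.log t) := by
        rw [div_mul_div_comm, sq]
        ring
      have step3 : (4 * K / Real.log t) * (t / Real.log t)
          ≤ (4 * K / Real.log 2) * (t / Real.log t) := by
        apply mul_le_mul_of_nonneg_right _ hT.le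
        apply div_le_div_of_nonneg_left (by linarith) hl2 hl2t
      linarith
    have b3 : K / Real.log 2 ^ 2 * (u⁻¹ - 2) ≤ (4 * K / Real.log 2 ^ 2) * (t / Real.log t) := by
      have step1 : K / Real.log 2 ^ 2 * (u⁻¹ - 2) ≤ K / Real.log 2 ^ 2 * (2 * s) := by
        apply mul_le_mul_of_nonneg_left (by linarith) (div_nonneg hK0 (by positivity))
      have step2 : 2 * s ≤ 4 * (t / Real.log t) := by
        rw [show (4:ℝ) * (t / Real.log t) = 4 * t / Real.log t from (mul_div_assoc _ _ _).symm,
          le_div_iff₀ hlt]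
        nlinarith [hst, hlts, hs0]
      have step3 : K / Real.log 2 ^ 2 * (2 * s) ≤ K / Real.log 2 ^ 2 * (4 * (t / Real.log t)) := by
        apply mul_le_mul_of_nonneg_left step2 (div_nonneg hK0 (by positivity))
      calc K / Real.log 2 ^ 2 * (u⁻¹ - 2) ≤ K / Real.log 2 ^ 2 * (4 * (t / Real.log t)) := by
            linarith
        _ = (4 * K / Real.log 2 ^ 2) * (t / Real.log t) := by ring
    have hexp : K * (1 + 4 / Real.log 2 + 4 / Real.log 2 ^ 2) * t / Real.log t
        = K * (t / Real.log t) + (4 * K / Real.log 2) * (t / Real.log t)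
          + (4 * K / Real.log 2 ^ 2) * (t / Real.log t) := by
      field_simp
    rw [hexp, b1]
    linarith
  calc ‖∫ x in Ioi (0:ℝ), (Real.sin (t * x) : ℂ) * χ x * E x‖
      ≤ ∫ x in Ioi (0:ℝ), ‖(Real.sin (t * x) : ℂ) * χ x * E x‖ :=
        norm_integral_le_integral_norm _
    _ ≤ ∫ x in Ioi (0:ℝ), g x := by
        apply integral_mono_of_nonneg
        · exact Eventually.of_forall fun x => norm_nonneg _
        · exact hgi
        · exact (ae_restrict_iff' measurableSet_Ioi).2 (Eventually.of_forall hbound)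
    _ = _ := hgval
    _ ≤ _ := hfin
end

section
/- (Jensen–Nenciu inversion lemma) Let A be a closed operator on a Hilbert space H and S a bounded projection on H. Suppose A + S has a bounded inverse. Then A has a bounded inverse if and only if B := S − S(A+S)⁻¹S has a bounded inverse on SH, and in that case A⁻¹ = (A+S)⁻¹ + (A+S)⁻¹ S B⁻¹ S (A+S)⁻¹. -/
open ContinuousLinearMap

/-- `R` is a bounded two-sided inverse of the (possibly unbounded, partially defined)
operator `T`. -/
def IsBoundedInverse {H : Type*} [NormedAddCommGroup H] [InnerProductSpace ℂ H]
    (T : H →ₗ.[ℂ] H) (R : H →L[ℂ] H) : Prop :=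
  (∀ x : T.domain, R (T x) = (x : H)) ∧ ∀ y : H, ∃ h : R y ∈ T.domain, T ⟨R y, h⟩ = y

/-!
Write `R = (A + S)⁻¹`, so that `R (A x + S x) = x` on the domain of `A` and `A R = 1 - S R`.
On the domain of `A`, `S R A = S - S R S = B S` because `S² = S`, which makes
`R + R S B⁻¹ S R` a left inverse of `A`; and `B (B⁻¹ S R y) = S R y` is exactly what is needed
to cancel the term `-S R y` in `A R y = y - S R y`, making it a right inverse. Conversely,
if `A⁻¹` exists then `S + S A⁻¹ S` inverts `B` on `SH`, because `A R S = S - S R S` and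
`R S + R S A⁻¹ S = A⁻¹ S`.
-/

/-- `B'` is an inverse of `B` on the range of the projection `S` (and vanishes off it). -/
def IsInverseOnRange {H : Type*} [NormedAddCommGroup H] [InnerProductSpace ℂ H]
    (S B B' : H →L[ℂ] H) : Prop :=
  B' ∘L S = B' ∧ S ∘L B' = B' ∧
    (∀ x : H, B' (B (S x)) = S x) ∧ ∀ x : H, B (B' (S x)) = S x

section

variable {H : Type*} [NormedAddCommGroup H] [InnerProductSpace ℂ H]
  {A : H →ₗ.[ℂ] H} {S R : H →L[ℂ] H}

theorem sub_comp_comp_apply_of_apply_eq {v : H} (hv : S v = v) :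
    (S - S ∘L R ∘L S) v = v - S (R v) := by
  simp only [sub_apply, comp_apply, hv]

namespace IsBoundedInverse

variable (hR : IsBoundedInverse (A + (S : H →ₗ[ℂ] H).toPMap ⊤) R)
include hR

theorem apply_add_apply (x : A.domain) : R (A x + S x) = x :=
  hR.1 ⟨x, x.2, trivial⟩

theorem apply_mem_domain (y : H) : R y ∈ A.domain :=
  (hR.2 y).1.1

theorem apply_apply_eq_sub (y : H) : A ⟨R y, hR.apply_mem_domain y⟩ = y - S (R y) :=
  eq_sub_of_add_eq (hR.2 y).2

theorem isBoundedInverse_of_isInverseOnRange (hS : IsIdempotentElem S) {B' : H →L[ℂ] H}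
    (hB' : IsInverseOnRange S (S - S ∘L R ∘L S) B') :
    IsBoundedInverse A (R + R ∘L S ∘L B' ∘L S ∘L R) := by
  obtain ⟨-, hSB', hB'B, hBB'⟩ := hB'
  have hSS (v : H) : S (S v) = S v := congr($hS v)
  constructor
  · intro x
    have hRA : R (A x) = x - R (S x) := eq_sub_of_add_eq (by rw [← map_add, hR.apply_add_apply])
    have hSRA : S (R (A x)) = (S - S ∘L R ∘L S) (S x) := by
      rw [sub_comp_comp_apply_of_apply_eq (hSS x), hRA, map_sub]
    rw [add_apply, comp_apply, comp_apply, comp_apply, comp_apply, hSRA, hB'B, hSS, hRA,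
      sub_add_cancel]
  · intro y
    set w := B' (S (R y))
    have hSw : S w = w := congr($hSB' (S (R y)))
    have hw : w - S (R w) = S (R y) := by
      rw [← sub_comp_comp_apply_of_apply_eq hSw]
      exact hBB' (R y)
    have hsum : (R + R ∘L S ∘L B' ∘L S ∘L R) y = R y + R w := by
      simp only [add_apply, comp_apply, w, hSw]
    rw [hsum]
    refine ⟨A.domain.add_mem (hR.apply_mem_domain y) (hR.apply_mem_domain w), ?_⟩
    change A (⟨R y, hR.apply_mem_domain y⟩ + ⟨R w, hR.apply_mem_domain w⟩) = y
    rw [A.map_add, hR.apply_apply_eq_sub, hR.apply_apply_eq_sub, hw, sub_add_cancel]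

theorem isInverseOnRange_of_isBoundedInverse (hS : IsIdempotentElem S) {A' : H →L[ℂ] H}
    (hA' : IsBoundedInverse A A') :
    IsInverseOnRange S (S - S ∘L R ∘L S) (S + S ∘L A' ∘L S) := by
  have hSS (v : H) : S (S v) = S v := congr($hS v)
  refine ⟨?_, ?_, fun x => ?_, fun x => ?_⟩
  · ext v
    simp only [comp_apply, add_apply, hSS]
  · ext v
    simp only [comp_apply, add_apply, map_add, hSS]
  · have hBS : (S - S ∘L R ∘L S) (S x) = A ⟨R (S x), hR.apply_mem_domain _⟩ := by
      rw [sub_comp_comp_apply_of_apply_eq (hSS x), hR.apply_apply_eq_sub]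
    have hSB : S ((S - S ∘L R ∘L S) (S x)) = (S - S ∘L R ∘L S) (S x) := by
      simp only [sub_apply, comp_apply, map_sub, hSS]
    rw [add_apply, comp_apply, comp_apply, hSB, hBS, hA'.1, ← hBS,
      sub_comp_comp_apply_of_apply_eq (hSS x)]
    exact sub_add_cancel _ _
  · obtain ⟨hu, hAu⟩ := hA'.2 (S x)
    set u := A' (S x)
    have hRSu : R (S x) + R (S u) = u := by
      rw [← map_add, ← hAu]
      exact hR.apply_add_apply ⟨u, hu⟩
    have hB'S : (S + S ∘L A' ∘L S) (S x) = S x + S u := by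
      simp only [add_apply, comp_apply, hSS, u]
    rw [hB'S, sub_comp_comp_apply_of_apply_eq (by rw [map_add, hSS, hSS]), map_add R,
      hRSu, add_sub_cancel_right]

end IsBoundedInverse

end

theorem stmt_5_general {H : Type*} [NormedAddCommGroup H] [InnerProductSpace ℂ H]
    (A : H →ₗ.[ℂ] H)
    (S : H →L[ℂ] H) (hS : S ∘L S = S)
    (R : H →L[ℂ] H)
    (hR : IsBoundedInverse (A + (S : H →ₗ[ℂ] H).toPMap ⊤) R) :
    letI B : H →L[ℂ] H := S - S ∘L R ∘L S
    ((∃ A' : H →L[ℂ] H, IsBoundedInverse A A') ↔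
      ∃ B' : H →L[ℂ] H, B' ∘L S = B' ∧ S ∘L B' = B' ∧
        (∀ x : H, B' (B (S x)) = S x) ∧ (∀ x : H, B (B' (S x)) = S x)) ∧
    (∀ B' : H →L[ℂ] H, (B' ∘L S = B' ∧ S ∘L B' = B' ∧
        (∀ x : H, B' (B (S x)) = S x) ∧ (∀ x : H, B (B' (S x)) = S x)) →
      IsBoundedInverse A (R + R ∘L S ∘L B' ∘L S ∘L R)) :=
  have hinv (B' : H →L[ℂ] H) (hB' : IsInverseOnRange S (S - S ∘L R ∘L S) B') :
      IsBoundedInverse A (R + R ∘L S ∘L B' ∘L S ∘L R) :=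
    hR.isBoundedInverse_of_isInverseOnRange hS hB'
  ⟨⟨fun ⟨_, hA'⟩ => ⟨_, hR.isInverseOnRange_of_isBoundedInverse hS hA'⟩,
    fun ⟨B', hB'⟩ => ⟨_, hinv B' hB'⟩⟩, hinv⟩

/-- Jensen–Nenciu inversion lemma: let `A` be a densely defined closed operator on a Hilbert
space `H` and `S` a bounded projection, and suppose `A + S` has a bounded inverse `R`.
Then `A` has a bounded inverse iff `B := S − S(A+S)⁻¹S` has a bounded inverse on `SH`,
in which case `A⁻¹ = (A+S)⁻¹ + (A+S)⁻¹ S B⁻¹ S (A+S)⁻¹`. -/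
theorem stmt_5 {H : Type*} [NormedAddCommGroup H] [InnerProductSpace ℂ H] [CompleteSpace H]
    (A : H →ₗ.[ℂ] H) (hAdense : Dense (A.domain : Set H)) (hAclosed : A.IsClosed)
    (S : H →L[ℂ] H) (hS : S ∘L S = S)
    (R : H →L[ℂ] H)
    (hR : IsBoundedInverse (A + (S : H →ₗ[ℂ] H).toPMap ⊤) R) :
    letI B : H →L[ℂ] H := S - S ∘L R ∘L S
    ((∃ A' : H →L[ℂ] H, IsBoundedInverse A A') ↔
      ∃ B' : H →L[ℂ] H, B' ∘L S = B' ∧ S ∘L B' = B' ∧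
        (∀ x : H, B' (B (S x)) = S x) ∧ (∀ x : H, B (B' (S x)) = S x)) ∧
    (∀ B' : H →L[ℂ] H, (B' ∘L S = B' ∧ S ∘L B' = B' ∧
        (∀ x : H, B' (B (S x)) = S x) ∧ (∀ x : H, B (B' (S x)) = S x)) →
      IsBoundedInverse A (R + R ∘L S ∘L B' ∘L S ∘L R)) :=
  stmt_5_general A S hS R hR
end

section
/- Fix u₁, u₂ ∈ ℝⁿ and let 0 ≤ k, ℓ < n, β > 0 with k + ℓ + β ≥ n and k + ℓ ≠ n. Then ∫_{ℝⁿ} ⟨z⟩^{−β−ε} / (|z−u₁|^k |z−u₂|^ℓ) dz ≲ |u₁−u₂|^{−max(0, k+ℓ−n)} when |u₁−u₂| ≤ 1, and ≲ |u₁−u₂|^{−min(k, ℓ, k+ℓ+β−n)} when |u₁−u₂| > 1, with implicit constant independent of u₁, u₂. -/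
/-!
Write `d = ‖u₁ - u₂‖`, `r = d / 2` and `s = β + ε`. Where `z` is closer to `u₁` than to `u₂`,
`‖z - u₂‖ ≥ max r ‖z - u₁‖`, so the integrand is at most `⟨z⟩^{-s} ‖y‖^{-k} (max r ‖y‖)^{-l}`
with `y = z - u₁`, and symmetrically near `u₂`. This kernel is estimated in two ways.

* If `k + l > n`, drop the weight: by scaling, `∫ ‖y‖^{-k} (max r ‖y‖)^{-l} dy` equals
  `r^{n-k-l}` times the same integral with `r = 1`, which is finite because `k < n < k + l`.
* For `0 ≤ θ ≤ min k l`, `(max r ‖y‖)^{-l} ≤ r^{-θ} ‖y‖^{-(l-θ)}`, which leaves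
  `∫ ⟨z⟩^{-s} ‖z - a‖^{-t} dz` with `t = k + l - θ`. Comparing `⟨z⟩` with `‖z - a‖` gives
  `⟨z⟩^{-s} ‖y‖^{-t} ≤ ⟨z⟩^{-(s+t)} + ‖y‖^{-t} (max 1 ‖y‖)^{-s}`, integrable uniformly in `a`
  as soon as `t < n < s + t`. For `k + l < n` take `θ = 0`; for large `d` take
  `θ = min k (min l (k + l + β - n))`, where `ε > 0` makes `s + t > n` strict.
-/

open MeasureTheory Real Set Module

lemma rpow_neg_mul_rpow_neg_le_add {a b r k l : ℝ} (ha : 0 < a) (hb : 0 < b) (hk : 0 ≤ k)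
    (hl : 0 ≤ l) (hr : r ≤ max a b) :
    a ^ (-k) * b ^ (-l) ≤ a ^ (-k) * max r a ^ (-l) + b ^ (-l) * max r b ^ (-k) := by
  rcases le_total a b with hab | hab
  · have hb' : b ^ (-l) ≤ max r a ^ (-l) :=
      rpow_le_rpow_of_nonpos (ha.trans_le (le_max_right _ _))
        (max_le (hr.trans (max_eq_right hab).le) hab) (by linarith)
    have : 0 ≤ b ^ (-l) * max r b ^ (-k) := by positivity
    nlinarith [rpow_nonneg ha.le (-k)]
  · have ha' : a ^ (-k) ≤ max r b ^ (-k) :=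
      rpow_le_rpow_of_nonpos (hb.trans_le (le_max_right _ _))
        (max_le (hr.trans (max_eq_left hab).le) hab) (by linarith)
    have : 0 ≤ a ^ (-k) * max r a ^ (-l) := by positivity
    nlinarith [rpow_nonneg hb.le (-l)]

lemma rpow_neg_mul_max_rpow_neg_le {ρ r k l θ : ℝ} (hρ : 0 < ρ) (hr : 0 < r) (hθ : 0 ≤ θ)
    (hθl : θ ≤ l) :
    ρ ^ (-k) * max r ρ ^ (-l) ≤ r ^ (-θ) * ρ ^ (-(k + l - θ)) := by
  have hm : 0 < max r ρ := hr.trans_le (le_max_left _ _)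
  calc ρ ^ (-k) * max r ρ ^ (-l) = max r ρ ^ (-θ) * (ρ ^ (-k) * max r ρ ^ (-(l - θ))) := by
        rw [show -l = -θ + -(l - θ) by ring, rpow_add hm]; ring
    _ ≤ r ^ (-θ) * (ρ ^ (-k) * ρ ^ (-(l - θ))) := by
        have h₁ : max r ρ ^ (-θ) ≤ r ^ (-θ) :=
          rpow_le_rpow_of_nonpos hr (le_max_left _ _) (by linarith)
        have h₂ : max r ρ ^ (-(l - θ)) ≤ ρ ^ (-(l - θ)) :=
          rpow_le_rpow_of_nonpos hρ (le_max_right _ _) (by linarith)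
        gcongr
    _ = r ^ (-θ) * ρ ^ (-(k + l - θ)) := by
        rw [← rpow_add hρ]; ring_nf

lemma rpow_neg_mul_rpow_neg_le_add_max {X Y s t : ℝ} (hX : 1 ≤ X) (hY : 0 ≤ Y) (hs : 0 ≤ s)
    (ht : 0 ≤ t) :
    X ^ (-s) * Y ^ (-t) ≤ X ^ (-(s + t)) + Y ^ (-t) * max 1 Y ^ (-s) := by
  have hX0 : 0 < X := one_pos.trans_le hX
  rcases le_total X Y with hXY | hYX
  · have : Y ^ (-t) ≤ X ^ (-t) := rpow_le_rpow_of_nonpos hX0 hXY (by linarith)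
    have h2 : 0 ≤ Y ^ (-t) * max 1 Y ^ (-s) := by positivity
    calc X ^ (-s) * Y ^ (-t) ≤ X ^ (-s) * X ^ (-t) := by gcongr
      _ = X ^ (-(s + t)) := by rw [← rpow_add hX0]; ring_nf
      _ ≤ _ := le_add_of_nonneg_right h2
  · have : X ^ (-s) ≤ max 1 Y ^ (-s) :=
      rpow_le_rpow_of_nonpos (by positivity) (max_le hX hYX) (by linarith)
    calc X ^ (-s) * Y ^ (-t) ≤ Y ^ (-t) * max 1 Y ^ (-s) := by
          rw [mul_comm]; gcongr
      _ ≤ _ := le_add_of_nonneg_left (by positivity)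

lemma rpow_neg_half_mul_rpow_neg_le {q ρ s t : ℝ} (hq : 1 ≤ q) (hρ : 0 ≤ ρ) (hs : 0 ≤ s)
    (ht : 0 ≤ t) :
    q ^ (-s / 2) * ρ ^ (-t) ≤ q ^ (-(s + t) / 2) + ρ ^ (-t) * max 1 ρ ^ (-s) := by
  have hsqrt : ∀ x : ℝ, q ^ (-x / 2) = √q ^ (-x) := fun x => by
    rw [sqrt_eq_rpow, ← rpow_mul (by linarith)]; ring_nf
  rw [hsqrt, hsqrt]
  exact rpow_neg_mul_rpow_neg_le_add_max (one_le_sqrt.2 hq) hρ hs ht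

section

variable {E : Type*} [NormedAddCommGroup E]

lemma integrand_le_kernel_add {s k l : ℝ} (hk : 0 ≤ k) (hl : 0 ≤ l) {u₁ u₂ z : E}
    (h₁ : z ≠ u₁) (h₂ : z ≠ u₂) :
    (1 + ‖z‖ ^ 2) ^ (-s / 2) / (‖z - u₁‖ ^ k * ‖z - u₂‖ ^ l) ≤
      (1 + ‖z‖ ^ 2) ^ (-s / 2) *
        (‖z - u₁‖ ^ (-k) * max (‖u₁ - u₂‖ / 2) ‖z - u₁‖ ^ (-l) +
          ‖z - u₂‖ ^ (-l) * max (‖u₁ - u₂‖ / 2) ‖z - u₂‖ ^ (-k)) := by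
  have htri : ‖u₁ - u₂‖ / 2 ≤ max ‖z - u₁‖ ‖z - u₂‖ := by
    have := norm_sub_le_norm_sub_add_norm_sub u₁ z u₂
    rw [norm_sub_rev u₁ z] at this
    linarith [le_max_left ‖z - u₁‖ ‖z - u₂‖, le_max_right ‖z - u₁‖ ‖z - u₂‖]
  rw [div_eq_mul_inv, mul_inv, ← rpow_neg (norm_nonneg _), ← rpow_neg (norm_nonneg _)]
  exact mul_le_mul_of_nonneg_left (rpow_neg_mul_rpow_neg_le_add
    (norm_pos_iff.2 (sub_ne_zero.2 h₁)) (norm_pos_iff.2 (sub_ne_zero.2 h₂)) hk hl htri)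
    (by positivity)

variable [NormedSpace ℝ E]

lemma norm_rpow_neg_mul_max_eq {k l r : ℝ} (hr : 0 < r) (y : E) :
    ‖y‖ ^ (-k) * max r ‖y‖ ^ (-l) =
      r ^ (-(k + l)) * (‖r⁻¹ • y‖ ^ (-k) * max 1 ‖r⁻¹ • y‖ ^ (-l)) := by
  have hmax : max 1 (r⁻¹ * ‖y‖) = r⁻¹ * max r ‖y‖ := by
    rw [mul_max_of_nonneg _ _ (inv_nonneg.2 hr.le), inv_mul_cancel₀ hr.ne']
  rw [norm_smul, Real.norm_of_nonneg (inv_nonneg.2 hr.le), hmax,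
    mul_rpow (inv_nonneg.2 hr.le) (norm_nonneg _),
    mul_rpow (inv_nonneg.2 hr.le) (le_max_of_le_left hr.le), inv_rpow hr.le, inv_rpow hr.le,
    ← rpow_neg hr.le, ← rpow_neg hr.le, neg_neg, neg_neg, rpow_neg hr.le, rpow_add hr]
  field_simp

end

section

variable {E : Type*} [NormedAddCommGroup E] [NormedSpace ℝ E] [FiniteDimensional ℝ E]
  [MeasurableSpace E] [BorelSpace E] (μ : Measure E) [μ.IsAddHaarMeasure]

lemma integral_norm_rpow_neg_mul_max {k l r : ℝ} (hr : 0 < r) :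
    ∫ y, ‖y‖ ^ (-k) * max r ‖y‖ ^ (-l) ∂μ =
      r ^ ((finrank ℝ E : ℝ) - (k + l)) * ∫ y, ‖y‖ ^ (-k) * max 1 ‖y‖ ^ (-l) ∂μ := by
  simp_rw [norm_rpow_neg_mul_max_eq hr]
  rw [integral_const_mul, Measure.integral_comp_inv_smul_of_nonneg μ
    (fun y : E => ‖y‖ ^ (-k) * max 1 ‖y‖ ^ (-l)) hr.le, smul_eq_mul, ← mul_assoc, ← rpow_natCast,
    ← rpow_add hr]
  ring_nf

variable [Nontrivial E]

lemma integrable_norm_rpow_neg_mul_max_one {k l : ℝ}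
    (hk : k < finrank ℝ E) (hkl : finrank ℝ E < k + l) :
    Integrable (fun y : E => ‖y‖ ^ (-k) * max 1 ‖y‖ ^ (-l)) μ := by
  rw [integrable_fun_norm_addHaar μ (f := fun ρ => ρ ^ (-k) * max 1 ρ ^ (-l)),
    ← Ioc_union_Ioi_eq_Ioi zero_le_one]
  have hpow : ∀ ρ : ℝ, 0 < ρ → ∀ x : ℝ,
      ρ ^ (finrank ℝ E - 1) * ρ ^ x = ρ ^ ((finrank ℝ E : ℝ) - 1 + x) := fun ρ hρ x => by
    rw [rpow_add hρ, ← rpow_natCast, Nat.cast_sub finrank_pos, Nat.cast_one]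
  refine IntegrableOn.union ?_ ?_
  · have : IntegrableOn (fun ρ : ℝ => ρ ^ ((finrank ℝ E : ℝ) - 1 + -k)) (Ioc 0 1) := by
      rw [integrableOn_Ioc_iff_integrableOn_Ioo, intervalIntegral.integrableOn_Ioo_rpow_iff one_pos]
      linarith
    refine this.congr_fun (fun ρ hρ => ?_) measurableSet_Ioc
    simp only [smul_eq_mul, max_eq_left hρ.2, one_rpow, mul_one, hpow ρ hρ.1]
  · have : IntegrableOn (fun ρ : ℝ => ρ ^ ((finrank ℝ E : ℝ) - 1 + -(k + l))) (Ioi 1) := by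
      rw [integrableOn_Ioi_rpow_iff one_pos]; linarith
    refine this.congr_fun (fun ρ hρ => ?_) measurableSet_Ioi
    have hρ0 : (0 : ℝ) < ρ := one_pos.trans hρ
    rw [smul_eq_mul, max_eq_right (mem_Ioi.1 hρ).le, ← mul_assoc, hpow ρ hρ0, ← rpow_add hρ0]
    ring_nf

lemma integrable_norm_rpow_neg_mul_max {k l r : ℝ} (hr : 0 < r)
    (hk : k < finrank ℝ E) (hkl : finrank ℝ E < k + l) :
    Integrable (fun y : E => ‖y‖ ^ (-k) * max r ‖y‖ ^ (-l)) μ := by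
  simp_rw [norm_rpow_neg_mul_max_eq hr]
  exact ((integrable_comp_smul_iff μ _ (inv_ne_zero hr.ne')).2
    (integrable_norm_rpow_neg_mul_max_one μ hk hkl)).const_mul _

theorem exists_integral_le_mul_rpow_neg {s k l θ : ℝ} (hs : 0 ≤ s) (hθ : 0 ≤ θ) (hθk : θ ≤ k)
    (hθl : θ ≤ l) (hD : k + l - θ < finrank ℝ E) (hDs : finrank ℝ E < s + (k + l - θ)) :
    ∃ C : ℝ, ∀ u₁ u₂ : E, u₁ ≠ u₂ →
      ∫ z, (1 + ‖z‖ ^ 2) ^ (-s / 2) / (‖z - u₁‖ ^ k * ‖z - u₂‖ ^ l) ∂μ ≤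
        C * ‖u₁ - u₂‖ ^ (-θ) := by
  set t := k + l - θ
  set W : E → ℝ := fun z => (1 + ‖z‖ ^ 2) ^ (-(s + t) / 2)
  set g : E → ℝ := fun y => ‖y‖ ^ (-t) * max 1 ‖y‖ ^ (-s)
  have hW : Integrable W μ := integrable_rpow_neg_one_add_norm_sq (by linarith)
  have hg : Integrable g μ := integrable_norm_rpow_neg_mul_max_one μ hD (by linarith)
  have hmaj : ∀ a : E, Integrable (fun z => W z + g (z - a)) μ := fun a =>
    hW.add (hg.comp_sub_right a)
  have hmaj_int : ∀ a : E, ∫ z, W z + g (z - a) ∂μ = ∫ z, W z ∂μ + ∫ y, g y ∂μ := fun a => by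
    rw [integral_add hW (hg.comp_sub_right a), integral_sub_right_eq_self g a]
  refine ⟨2 ^ θ * (2 * (∫ z, W z ∂μ + ∫ y, g y ∂μ)), fun u₁ u₂ h => ?_⟩
  set r := ‖u₁ - u₂‖ / 2
  have hr : 0 < r := half_pos (norm_pos_iff.2 (sub_ne_zero.2 h))
  calc ∫ z, (1 + ‖z‖ ^ 2) ^ (-s / 2) / (‖z - u₁‖ ^ k * ‖z - u₂‖ ^ l) ∂μ
      ≤ ∫ z, r ^ (-θ) * ((W z + g (z - u₁)) + (W z + g (z - u₂))) ∂μ := by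
        refine integral_mono_of_nonneg (ae_of_all _ fun z => by positivity)
          (((hmaj u₁).add (hmaj u₂)).const_mul _) ?_
        filter_upwards [Measure.ae_ne μ u₁, Measure.ae_ne μ u₂] with z h₁ h₂
        have hb₁ := rpow_neg_mul_max_rpow_neg_le (k := k)
          (norm_pos_iff.2 (sub_ne_zero.2 h₁)) hr hθ hθl
        have hb₂ := rpow_neg_mul_max_rpow_neg_le (k := l)
          (norm_pos_iff.2 (sub_ne_zero.2 h₂)) hr hθ hθk
        rw [add_comm l k] at hb₂
        have hj : ∀ a : E, (1 + ‖z‖ ^ 2) ^ (-s / 2) * ‖z - a‖ ^ (-t) ≤ W z + g (z - a) :=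
          fun a => rpow_neg_half_mul_rpow_neg_le (by nlinarith [sq_nonneg ‖z‖]) (norm_nonneg _) hs
            (by linarith)
        calc (1 + ‖z‖ ^ 2) ^ (-s / 2) / (‖z - u₁‖ ^ k * ‖z - u₂‖ ^ l)
            ≤ (1 + ‖z‖ ^ 2) ^ (-s / 2) * (r ^ (-θ) * ‖z - u₁‖ ^ (-t) +
                r ^ (-θ) * ‖z - u₂‖ ^ (-t)) :=
              (integrand_le_kernel_add (hθ.trans hθk) (hθ.trans hθl) h₁ h₂).trans
                (by gcongr)
          _ = r ^ (-θ) * ((1 + ‖z‖ ^ 2) ^ (-s / 2) * ‖z - u₁‖ ^ (-t) +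
                (1 + ‖z‖ ^ 2) ^ (-s / 2) * ‖z - u₂‖ ^ (-t)) := by ring
          _ ≤ r ^ (-θ) * ((W z + g (z - u₁)) + (W z + g (z - u₂))) := by
              gcongr <;> exact hj _
    _ = 2 ^ θ * (2 * (∫ z, W z ∂μ + ∫ y, g y ∂μ)) * ‖u₁ - u₂‖ ^ (-θ) := by
        rw [integral_const_mul, integral_add (hmaj u₁) (hmaj u₂), hmaj_int, hmaj_int,
          div_rpow (norm_nonneg _) zero_le_two, rpow_neg zero_le_two]
        field_simp
        ring

theorem exists_integral_le_mul_rpow_neg_sub_finrank {s k l : ℝ} (hs : 0 ≤ s) (hk : 0 ≤ k)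
    (hl : 0 ≤ l) (hkD : k < finrank ℝ E) (hlD : l < finrank ℝ E) (hD : finrank ℝ E < k + l) :
    ∃ C : ℝ, ∀ u₁ u₂ : E, u₁ ≠ u₂ →
      ∫ z, (1 + ‖z‖ ^ 2) ^ (-s / 2) / (‖z - u₁‖ ^ k * ‖z - u₂‖ ^ l) ∂μ ≤
        C * ‖u₁ - u₂‖ ^ (-(k + l - finrank ℝ E)) := by
  set D : ℝ := (finrank ℝ E : ℝ)
  refine ⟨2 ^ (k + l - D) * (∫ y, ‖y‖ ^ (-k) * max 1 ‖y‖ ^ (-l) ∂μ +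
    ∫ y, ‖y‖ ^ (-l) * max 1 ‖y‖ ^ (-k) ∂μ), fun u₁ u₂ h => ?_⟩
  set r := ‖u₁ - u₂‖ / 2
  have hr : 0 < r := half_pos (norm_pos_iff.2 (sub_ne_zero.2 h))
  have hint₁ := (integrable_norm_rpow_neg_mul_max μ hr hkD hD).comp_sub_right u₁
  have hint₂ := (integrable_norm_rpow_neg_mul_max μ (k := l) (l := k) hr hlD
    (by linarith)).comp_sub_right u₂
  calc ∫ z, (1 + ‖z‖ ^ 2) ^ (-s / 2) / (‖z - u₁‖ ^ k * ‖z - u₂‖ ^ l) ∂μ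
      ≤ ∫ z, (‖z - u₁‖ ^ (-k) * max r ‖z - u₁‖ ^ (-l) +
          ‖z - u₂‖ ^ (-l) * max r ‖z - u₂‖ ^ (-k)) ∂μ := by
        refine integral_mono_of_nonneg (ae_of_all _ fun z => by positivity) (hint₁.add hint₂) ?_
        filter_upwards [Measure.ae_ne μ u₁, Measure.ae_ne μ u₂] with z h₁ h₂
        have hw : (1 + ‖z‖ ^ 2) ^ (-s / 2) ≤ 1 :=
          rpow_le_one_of_one_le_of_nonpos (by nlinarith [sq_nonneg ‖z‖]) (by linarith)
        refine (integrand_le_kernel_add hk hl h₁ h₂).trans ?_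
        exact mul_le_of_le_one_left (by positivity) hw
    _ = 2 ^ (k + l - D) * (∫ y, ‖y‖ ^ (-k) * max 1 ‖y‖ ^ (-l) ∂μ +
          ∫ y, ‖y‖ ^ (-l) * max 1 ‖y‖ ^ (-k) ∂μ) * ‖u₁ - u₂‖ ^ (-(k + l - D)) := by
        rw [integral_add hint₁ hint₂,
          integral_sub_right_eq_self (fun y => ‖y‖ ^ (-k) * max r ‖y‖ ^ (-l)) u₁,
          integral_sub_right_eq_self (fun y => ‖y‖ ^ (-l) * max r ‖y‖ ^ (-k)) u₂,
          integral_norm_rpow_neg_mul_max μ hr, integral_norm_rpow_neg_mul_max μ hr, add_comm l k,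
          ← mul_add, show D - (k + l) = -(k + l - D) by ring,
          div_rpow (norm_nonneg _) zero_le_two, rpow_neg zero_le_two]
        field_simp

end

theorem stmt_6_general (n : ℕ) (k l β ε : ℝ) (hk : 0 ≤ k) (hkn : k < n)
    (hl : 0 ≤ l) (hln : l < n) (hβ : 0 < β) (hε : 0 < ε)
    (hklβ : (n : ℝ) ≤ k + l + β) (hkl : k + l ≠ (n : ℝ)) :
    ∃ C : ℝ, ∀ u₁ u₂ : EuclideanSpace ℝ (Fin n), u₁ ≠ u₂ →
      ((‖u₁ - u₂‖ ≤ 1 →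
        (∫ z : EuclideanSpace ℝ (Fin n),
            (1 + ‖z‖ ^ 2) ^ (-(β + ε) / 2) / (‖z - u₁‖ ^ k * ‖z - u₂‖ ^ l))
          ≤ C * ‖u₁ - u₂‖ ^ (-(max 0 (k + l - n)))) ∧
      (1 < ‖u₁ - u₂‖ →
        (∫ z : EuclideanSpace ℝ (Fin n),
            (1 + ‖z‖ ^ 2) ^ (-(β + ε) / 2) / (‖z - u₁‖ ^ k * ‖z - u₂‖ ^ l))
          ≤ C * ‖u₁ - u₂‖ ^ (-(min k (min l (k + l + β - n)))))) := by
  have : NeZero n := ⟨by rintro rfl; simp only [CharP.cast_eq_zero] at hkn; linarith⟩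
  have hD : (finrank ℝ (EuclideanSpace ℝ (Fin n)) : ℝ) = n := by
    rw [finrank_euclideanSpace_fin]
  have hs : 0 ≤ β + ε := by positivity
  obtain ⟨C₀, hC₀⟩ : ∃ C₀ : ℝ, ∀ u₁ u₂ : EuclideanSpace ℝ (Fin n), u₁ ≠ u₂ →
      ∫ z, (1 + ‖z‖ ^ 2) ^ (-(β + ε) / 2) / (‖z - u₁‖ ^ k * ‖z - u₂‖ ^ l) ≤
        C₀ * ‖u₁ - u₂‖ ^ (-(max 0 (k + l - n))) := by
    rcases hkl.lt_or_gt with hlt | hgt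
    · rw [max_eq_left (by linarith)]
      exact exists_integral_le_mul_rpow_neg volume hs le_rfl hk hl (by rw [hD]; linarith)
        (by rw [hD]; linarith)
    · rw [max_eq_right (by linarith), ← hD]
      exact exists_integral_le_mul_rpow_neg_sub_finrank volume hs hk hl (by rwa [hD])
        (by rwa [hD]) (by rwa [hD])
  set θ := min k (min l (k + l + β - n))
  have hθ_gt : k + l - n < θ := lt_min (by linarith) (lt_min (by linarith) (by linarith))
  have hθ_le : θ ≤ k + l + β - n := (min_le_right _ _).trans (min_le_right _ _)
  obtain ⟨C₁, hC₁⟩ := exists_integral_le_mul_rpow_neg volume (θ := θ) hs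
    (le_min hk (le_min hl (by linarith))) (min_le_left _ _)
    ((min_le_right _ _).trans (min_le_left _ _)) (by rw [hD]; linarith) (by rw [hD]; linarith)
  refine ⟨max C₀ C₁, fun u₁ u₂ h => ⟨fun _ => (hC₀ u₁ u₂ h).trans ?_,
    fun _ => (hC₁ u₁ u₂ h).trans ?_⟩⟩
  · exact mul_le_mul_of_nonneg_right (le_max_left _ _) (by positivity)
  · exact mul_le_mul_of_nonneg_right (le_max_right _ _) (by positivity)

/-- For `0 ≤ k, ℓ < n`, `β > 0` with `k + ℓ + β ≥ n` and `k + ℓ ≠ n`: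
`∫_{ℝⁿ} ⟨z⟩^{−β−ε} |z−u₁|^{−k} |z−u₂|^{−ℓ} dz ≲ |u₁−u₂|^{−max(0,k+ℓ−n)}` if `|u₁−u₂| ≤ 1`,
and `≲ |u₁−u₂|^{−min(k,ℓ,k+ℓ+β−n)}` if `|u₁−u₂| > 1`, uniformly in `u₁, u₂`. -/
theorem stmt_6 (n : ℕ) (hn : 0 < n) (k l β ε : ℝ) (hk : 0 ≤ k) (hkn : k < n)
    (hl : 0 ≤ l) (hln : l < n) (hβ : 0 < β) (hε : 0 < ε)
    (hklβ : (n : ℝ) ≤ k + l + β) (hkl : k + l ≠ (n : ℝ)) :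
    ∃ C : ℝ, ∀ u₁ u₂ : EuclideanSpace ℝ (Fin n), u₁ ≠ u₂ →
      ((‖u₁ - u₂‖ ≤ 1 →
        (∫ z : EuclideanSpace ℝ (Fin n),
            (1 + ‖z‖ ^ 2) ^ (-(β + ε) / 2) / (‖z - u₁‖ ^ k * ‖z - u₂‖ ^ l))
          ≤ C * ‖u₁ - u₂‖ ^ (-(max 0 (k + l - n)))) ∧
      (1 < ‖u₁ - u₂‖ →
        (∫ z : EuclideanSpace ℝ (Fin n),
            (1 + ‖z‖ ^ 2) ^ (-(β + ε) / 2) / (‖z - u₁‖ ^ k * ‖z - u₂‖ ^ l))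
          ≤ C * ‖u₁ - u₂‖ ^ (-(min k (min l (k + l + β - n)))))) :=
  stmt_6_general n k l β ε hk hkn hl hln hβ hε hklβ hkl
end

section
/- In ℝ⁴, an integral operator with kernel K(x,y) = v(x)|x−y|^γ v(y), where γ > 0 and |v(x)| ≲ ⟨x⟩^{−β} with β > 2 + γ, is Hilbert–Schmidt on L²(ℝ⁴), i.e. ∬ |v(x)|² |x−y|^{2γ} |v(y)|² dx dy < ∞. -/
open MeasureTheory Real

/-- In `ℝ⁴`, the kernel `v(x)|x−y|^γ v(y)` with `γ > 0`, `|v(x)| ≲ ⟨x⟩^{−β}`, `β > 2 + γ`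
is Hilbert–Schmidt: `∬ |v(x)|² |x−y|^{2γ} |v(y)|² dx dy < ∞`. -/
theorem stmt_9 (γ β C : ℝ) (hγ : 0 < γ) (hβ : 2 + γ < β)
    (v : EuclideanSpace ℝ (Fin 4) → ℝ)
    (hv : ∀ x, |v x| ≤ C * (1 + ‖x‖ ^ 2) ^ (-β / 2)) :
    (∫⁻ p : EuclideanSpace ℝ (Fin 4) × EuclideanSpace ℝ (Fin 4),
        ENNReal.ofReal ((v p.1) ^ 2 * ‖p.1 - p.2‖ ^ (2 * γ) * (v p.2) ^ 2)) < ⊤ := by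
  have hbase : ∀ z : EuclideanSpace ℝ (Fin 4), (0:ℝ) < 1 + ‖z‖ ^ 2 := fun z => by positivity
  have hC : 0 ≤ C := by
    have h := hv 0
    simp only [norm_zero, ne_eq, OfNat.ofNat_ne_zero, not_false_eq_true, zero_pow, add_zero,
      Real.one_rpow] at h
    exact le_trans (abs_nonneg _) (le_trans h (by norm_num))
  set g : EuclideanSpace ℝ (Fin 4) → ℝ := fun z => (C ^ 2 * 2 ^ γ) * (1 + ‖z‖ ^ 2) ^ (γ - β)
    with hg
  have hg0 : ∀ z, 0 ≤ g z := fun z => by rw [hg]; positivity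
  -- square‑root atoms
  have hsq : ∀ z : EuclideanSpace ℝ (Fin 4),
      ((1 + ‖z‖ ^ 2) ^ ((1:ℝ)/2)) ^ 2 = 1 + ‖z‖ ^ 2 := by
    intro z
    rw [← Real.rpow_natCast ((1 + ‖z‖ ^ 2) ^ ((1:ℝ)/2)) 2, ← Real.rpow_mul (hbase z).le]
    norm_num
  have hnlea : ∀ z : EuclideanSpace ℝ (Fin 4), ‖z‖ ≤ (1 + ‖z‖ ^ 2) ^ ((1:ℝ)/2) := by
    intro z
    have h1 := hsq z
    have h2 : (0:ℝ) ≤ (1 + ‖z‖ ^ 2) ^ ((1:ℝ)/2) := Real.rpow_nonneg (hbase z).le _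
    nlinarith [norm_nonneg z]
  have hone : ∀ z : EuclideanSpace ℝ (Fin 4), (1:ℝ) ≤ (1 + ‖z‖ ^ 2) ^ ((1:ℝ)/2) := by
    intro z
    have h1 := hsq z
    have h2 : (0:ℝ) ≤ (1 + ‖z‖ ^ 2) ^ ((1:ℝ)/2) := Real.rpow_nonneg (hbase z).le _
    nlinarith [sq_nonneg (‖z‖)]
  -- the pointwise key estimate
  have hv2 : ∀ z, (v z) ^ 2 ≤ C ^ 2 * (1 + ‖z‖ ^ 2) ^ (-β) := by
    intro z
    have h := hv z
    calc (v z) ^ 2 = |v z| ^ 2 := (sq_abs _).symm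
      _ ≤ (C * (1 + ‖z‖ ^ 2) ^ (-β / 2)) ^ 2 := by
          apply pow_le_pow_left₀ (abs_nonneg _) h
      _ = C ^ 2 * (1 + ‖z‖ ^ 2) ^ (-β) := by
          rw [mul_pow, ← Real.rpow_natCast ((1 + ‖z‖ ^ 2) ^ (-β / 2)) 2,
            ← Real.rpow_mul (hbase z).le]
          norm_num
  have key : ∀ x y : EuclideanSpace ℝ (Fin 4),
      (v x) ^ 2 * ‖x - y‖ ^ (2 * γ) * (v y) ^ 2 ≤ g x * g y := by
    intro x y
    set a := (1 + ‖x‖ ^ 2) ^ ((1:ℝ)/2) with ha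
    set b := (1 + ‖y‖ ^ 2) ^ ((1:ℝ)/2) with hb
    have ha0 : 0 ≤ a := Real.rpow_nonneg (hbase x).le _
    have hb0 : 0 ≤ b := Real.rpow_nonneg (hbase y).le _
    have hnorm : ‖x - y‖ ≤ 2 * a * b := by
      have h1 : ‖x - y‖ ≤ ‖x‖ + ‖y‖ := norm_sub_le _ _
      have h2 := hnlea x
      have h3 := hnlea y
      have h4 := hone x
      have h5 := hone y
      nlinarith
    have hpow : ‖x - y‖ ^ (2 * γ) ≤ 2 ^ (2 * γ) *
        ((1 + ‖x‖ ^ 2) ^ γ * (1 + ‖y‖ ^ 2) ^ γ) := by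
      have h1 : ‖x - y‖ ^ (2 * γ) ≤ (2 * a * b) ^ (2 * γ) :=
        Real.rpow_le_rpow (norm_nonneg _) hnorm (by positivity)
      have h2 : (2 * a * b) ^ (2 * γ) = 2 ^ (2 * γ) * a ^ (2 * γ) * b ^ (2 * γ) := by
        rw [Real.mul_rpow (by positivity) hb0, Real.mul_rpow (by norm_num) ha0]
      have h3 : a ^ (2 * γ) = (1 + ‖x‖ ^ 2) ^ γ := by
        rw [ha, ← Real.rpow_mul (hbase x).le]; norm_num; ring_nf
      have h4 : b ^ (2 * γ) = (1 + ‖y‖ ^ 2) ^ γ := by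
        rw [hb, ← Real.rpow_mul (hbase y).le]; norm_num; ring_nf
      rw [h2, h3, h4] at h1
      linarith [h1]
    have step : (v x) ^ 2 * ‖x - y‖ ^ (2 * γ) * (v y) ^ 2 ≤
        (C ^ 2 * (1 + ‖x‖ ^ 2) ^ (-β)) *
        (2 ^ (2 * γ) * ((1 + ‖x‖ ^ 2) ^ γ * (1 + ‖y‖ ^ 2) ^ γ)) *
        (C ^ 2 * (1 + ‖y‖ ^ 2) ^ (-β)) := by
      have hx2 := hv2 x
      have hy2 := hv2 y
      have h0x : (0:ℝ) ≤ (v x) ^ 2 := sq_nonneg _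
      have h0y : (0:ℝ) ≤ (v y) ^ 2 := sq_nonneg _
      have h0n : (0:ℝ) ≤ ‖x - y‖ ^ (2 * γ) := Real.rpow_nonneg (norm_nonneg _) _
      gcongr
    refine step.trans (le_of_eq ?_)
    have e1 : (1 + ‖x‖ ^ 2) ^ (γ - β) = (1 + ‖x‖ ^ 2) ^ γ * (1 + ‖x‖ ^ 2) ^ (-β) := by
      rw [← Real.rpow_add (hbase x)]; ring_nf
    have e2 : (1 + ‖y‖ ^ 2) ^ (γ - β) = (1 + ‖y‖ ^ 2) ^ γ * (1 + ‖y‖ ^ 2) ^ (-β) := by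
      rw [← Real.rpow_add (hbase y)]; ring_nf
    have e3 : (2:ℝ) ^ (2 * γ) = 2 ^ γ * 2 ^ γ := by
      rw [← Real.rpow_add (by norm_num : (0:ℝ) < 2), two_mul]
    rw [hg]
    simp only []
    rw [e1, e2, e3]
    ring
  -- integrability of g
  have hcont : Continuous g := by
    apply continuous_const.mul
    exact (continuous_const.add ((continuous_norm).pow 2)).rpow_const
      (fun z => Or.inl (hbase z).ne')
  have hgbound : ∀ z : EuclideanSpace ℝ (Fin 4),
      (1 + ‖z‖ ^ 2) ^ (γ - β) ≤ 2 ^ (2 * (β - γ)) * (1 + ‖z‖) ^ (-(2 * (β - γ))) := by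
    intro z
    have hb0 : (0:ℝ) < ((1 + ‖z‖) / 2) ^ 2 := by positivity
    have hle : ((1 + ‖z‖) / 2) ^ 2 ≤ 1 + ‖z‖ ^ 2 := by nlinarith [norm_nonneg z]
    have h := Real.rpow_le_rpow_of_nonpos hb0 hle (by linarith : γ - β ≤ 0)
    refine h.trans (le_of_eq ?_)
    have hz0 : (0:ℝ) ≤ (1 + ‖z‖) := by positivity
    rw [← Real.rpow_natCast ((1 + ‖z‖) / 2) 2, ← Real.rpow_mul (by positivity),
      Real.div_rpow hz0 (by norm_num : (0:ℝ) ≤ 2)]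
    rw [div_eq_mul_inv, ← Real.rpow_neg (by norm_num : (0:ℝ) ≤ 2)]
    rw [show ((2:ℕ):ℝ) * (γ - β) = -(2 * (β - γ)) by push_cast; ring, neg_neg]
    ring
  have hint : Integrable g := by
    have h1 : Integrable (fun z : EuclideanSpace ℝ (Fin 4) =>
        ((1:ℝ) + ‖z‖) ^ (-(2 * (β - γ)))) := by
      apply integrable_one_add_norm
      simp only [finrank_euclideanSpace, Fintype.card_fin]
      push_cast
      linarith
    apply Integrable.mono' ((h1.const_mul (C ^ 2 * 2 ^ γ * 2 ^ (2 * (β - γ)))))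
      hcont.aestronglyMeasurable
    filter_upwards with z
    rw [Real.norm_of_nonneg (hg0 z), hg]
    simp only []
    calc C ^ 2 * 2 ^ γ * (1 + ‖z‖ ^ 2) ^ (γ - β)
        ≤ C ^ 2 * 2 ^ γ * (2 ^ (2 * (β - γ)) * (1 + ‖z‖) ^ (-(2 * (β - γ)))) := by
          apply mul_le_mul_of_nonneg_left (hgbound z) (by positivity)
      _ = C ^ 2 * 2 ^ γ * 2 ^ (2 * (β - γ)) * (1 + ‖z‖) ^ (-(2 * (β - γ))) := by ring
  have hgm : Measurable fun z => ENNReal.ofReal (g z) :=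
    ENNReal.measurable_ofReal.comp hcont.measurable
  have hfin : (∫⁻ z, ENNReal.ofReal (g z)) < ⊤ := hint.lintegral_lt_top
  calc (∫⁻ p : EuclideanSpace ℝ (Fin 4) × EuclideanSpace ℝ (Fin 4),
        ENNReal.ofReal ((v p.1) ^ 2 * ‖p.1 - p.2‖ ^ (2 * γ) * (v p.2) ^ 2))
      ≤ ∫⁻ p : EuclideanSpace ℝ (Fin 4) × EuclideanSpace ℝ (Fin 4),
        ENNReal.ofReal (g p.1 * g p.2) :=
        lintegral_mono fun p => ENNReal.ofReal_le_ofReal (key p.1 p.2)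
    _ = ∫⁻ p : EuclideanSpace ℝ (Fin 4) × EuclideanSpace ℝ (Fin 4),
        ENNReal.ofReal (g p.1) * ENNReal.ofReal (g p.2) := by
        congr 1; funext p; rw [ENNReal.ofReal_mul (hg0 p.1)]
    _ = (∫⁻ x, ENNReal.ofReal (g x)) * ∫⁻ y, ENNReal.ofReal (g y) := by
        rw [MeasureTheory.Measure.volume_eq_prod]
        exact lintegral_prod_mul hgm.aemeasurable hgm.aemeasurable
    _ < ⊤ := ENNReal.mul_lt_top hfin hfin
end

section
/- In ℝ⁴ with |V(x)| ≲ ⟨x⟩^{−4−ε}, let S₁ be the projection onto ker(U + vG₀v) and S₂ the projection onto ker(S₁PS₁) in S₁L². Then rank S₁ ≤ rank S₂ + 1. -/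
open MeasureTheory Real

noncomputable section

/-! Since `v ∈ L²` (by the decay of `V`), `v f ∈ L¹` for every `f ∈ L²`; and `|z|⁻²` is integrable
near `0` and bounded away from it in `ℝ⁴`. Hence for a.e. `x` the integral defining `G₀(v f)(x)` is
absolutely convergent, `f ↦ G₀(v f)` is linear up to null sets, and the solution set `K₁` of
`U f + v G₀(v f) = 0` is a subspace of `L²`. Then `K₂` is the intersection of `K₁` with the kernel
of the functional `f ↦ ⟪v, f⟫ = ∫ v f`, so it has codimension at most one in `K₁`. -/

/-- The operator `G₀ = (−Δ)⁻¹` on `ℝ⁴`, with integral kernel `−(4π²)⁻¹|x−y|^{−2}`. -/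
def G0 (h : EuclideanSpace ℝ (Fin 4) → ℝ) (x : EuclideanSpace ℝ (Fin 4)) : ℝ :=
  -(4 * π ^ 2)⁻¹ * ∫ y : EuclideanSpace ℝ (Fin 4), h y / ‖x - y‖ ^ 2

theorem Submodule.rank_le_rank_inf_ker_add_one {K V : Type*} [DivisionRing K] [AddCommGroup V]
    [Module K V] (W : Submodule K V) (φ : V →ₗ[K] K) :
    Module.rank K W ≤ Module.rank K ↥(W ⊓ LinearMap.ker φ) + 1 := by
  by_cases hW : W ≤ LinearMap.ker φ
  · rw [inf_eq_left.2 hW]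
    exact le_self_add
  obtain ⟨g, hgW, hg⟩ := SetLike.not_le_iff_exists.1 hW
  rw [LinearMap.mem_ker] at hg
  have hsplit : W ≤ (W ⊓ LinearMap.ker φ) ⊔ K ∙ g := by
    intro f hf
    set c := φ f * (φ g)⁻¹
    have hker : f - c • g ∈ W ⊓ LinearMap.ker φ :=
      ⟨W.sub_mem hf (W.smul_mem c hgW), by simp [c, hg]⟩
    rw [← sub_add_cancel f (c • g)]
    exact Submodule.add_mem_sup hker (Submodule.smul_mem _ c (Submodule.mem_span_singleton_self g))
  calc Module.rank K W ≤ Module.rank K ↥((W ⊓ LinearMap.ker φ) ⊔ K ∙ g) :=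
        Submodule.rank_mono hsplit
    _ ≤ Module.rank K ↥(W ⊓ LinearMap.ker φ) + Module.rank K ↥(K ∙ g) :=
        Submodule.rank_add_le_rank_add_rank _ _
    _ ≤ Module.rank K ↥(W ⊓ LinearMap.ker φ) + 1 := by
        gcongr
        exact (rank_span_le _).trans (by simp)

theorem Integrable.memLp_two_sqrt_abs {α : Type*} [MeasurableSpace α] {μ : Measure α}
    {V : α → ℝ} (hV : Integrable V μ) : MemLp (fun x => √|V x|) 2 μ := by
  refine (memLp_two_iff_integrable_sq (continuous_sqrt.comp_aestronglyMeasurable hV.1.norm)).2 ?_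
  simpa only [Real.norm_eq_abs, sq_sqrt (abs_nonneg _)] using hV.abs

theorem integral_mul_eq_inner_toLp {α : Type*} [MeasurableSpace α] {μ : Measure α}
    {v : α → ℝ} (hv : MemLp v 2 μ) (f : Lp ℝ 2 μ) :
    ∫ y, v y * f y ∂μ = inner ℝ (hv.toLp v) f := by
  rw [L2.inner_def]
  refine integral_congr_ae ?_
  filter_upwards [hv.coeFn_toLp] with y hy
  simp [hy, mul_comm]

theorem ae_integrable_mul_comp_sub {G : Type*} [AddGroup G] [MeasurableSpace G]
    [MeasurableAdd₂ G] [MeasurableNeg G] {μ : Measure G} [SFinite μ] [μ.IsAddRightInvariant]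
    {h k : G → ℝ} {s : Set G} {M : ℝ} (hh : Integrable h μ) (hk : Measurable k)
    (hs : MeasurableSet s) (hks : IntegrableOn k s μ) (hM : ∀ z ∉ s, |k z| ≤ M) :
    ∀ᵐ x ∂μ, Integrable (fun y => h y * k (x - y)) μ := by
  have hnear : ∀ᵐ x ∂μ, Integrable (fun y => h y * s.indicator k (x - y)) μ := by
    simpa using (hh.convolution_integrand (ContinuousLinearMap.mul ℝ ℝ)
      ((integrable_indicator_iff hs).2 hks)).prod_right_ae
  filter_upwards [hnear] with x hx
  have hfar : Integrable (fun y => h y * sᶜ.indicator k (x - y)) μ := by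
    refine hh.mul_bdd (c := max M 0)
      ((hk.indicator hs.compl).comp (measurable_const.sub measurable_id)).aestronglyMeasurable
      (ae_of_all _ fun y => ?_)
    by_cases hy : x - y ∈ s
    · simp [hy]
    · simpa [hy] using Or.inl (hM _ hy)
  refine (hx.add hfar).congr (ae_of_all _ fun y => ?_)
  simp only [Pi.add_apply, ← mul_add, Set.indicator_self_add_compl_apply]

section FiniteDimensional

variable {E : Type*} [NormedAddCommGroup E] [NormedSpace ℝ E] [FiniteDimensional ℝ E]
  [MeasurableSpace E] [BorelSpace E] {μ : Measure E} [μ.IsAddHaarMeasure]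

theorem integrable_of_abs_le_mul_rpow_neg_one_add_norm_sq {V : E → ℝ} {C r : ℝ}
    (hr : (Module.finrank ℝ E : ℝ) < r) (hVm : AEStronglyMeasurable V μ)
    (hV : ∀ x, |V x| ≤ C * (1 + ‖x‖ ^ 2) ^ (-r / 2)) : Integrable V μ :=
  ((integrable_rpow_neg_one_add_norm_sq hr).const_mul C).mono' hVm (ae_of_all _ hV)

theorem integrableOn_ball_inv_norm_sq (hE : 2 < Module.finrank ℝ E) (r : ℝ) :
    IntegrableOn (fun z : E => (‖z‖ ^ 2)⁻¹) (Metric.ball 0 r) μ := by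
  refine integrableOn_ball_of_norm_le_rpow (by omega) (C := 1) (α := 2) (by exact_mod_cast hE)
    (ae_of_all _ fun z => ?_) (measurable_norm.pow_const 2).inv.aestronglyMeasurable
  rw [one_mul, Real.rpow_neg (norm_nonneg z), Real.rpow_two, norm_inv, norm_pow, norm_norm]

theorem ae_integrable_div_norm_sub_sq (hE : 2 < Module.finrank ℝ E) {h : E → ℝ}
    (hh : Integrable h μ) :
    ∀ᵐ x ∂μ, Integrable (fun y => h y / ‖x - y‖ ^ 2) μ := by
  have hfar : ∀ z ∉ Metric.ball (0 : E) 1, |(‖z‖ ^ 2)⁻¹| ≤ 1 := fun z hz => by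
    rw [Metric.mem_ball, dist_zero_right, not_lt] at hz
    rw [abs_inv, abs_pow, abs_norm]
    exact inv_le_one_of_one_le₀ (one_le_pow₀ hz)
  simpa only [div_eq_mul_inv] using ae_integrable_mul_comp_sub (k := fun z => (‖z‖ ^ 2)⁻¹) hh
    (by fun_prop) measurableSet_ball (integrableOn_ball_inv_norm_sq hE 1) hfar

end FiniteDimensional

local notation "ℝ⁴" => EuclideanSpace ℝ (Fin 4)

theorem G0_congr_ae {h₁ h₂ : ℝ⁴ → ℝ} (h : h₁ =ᵐ[volume] h₂) : G0 h₁ = G0 h₂ := by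
  funext x
  rw [G0, G0, integral_congr_ae (h.mono fun y hy => by rw [hy])]

theorem G0_const_mul (c : ℝ) (h : ℝ⁴ → ℝ) : G0 (fun y => c * h y) = fun x => c * G0 h x := by
  funext x
  simp only [G0, mul_div_assoc, integral_const_mul]
  ring

theorem G0_add_ae {h₁ h₂ : ℝ⁴ → ℝ} (hh₁ : Integrable h₁) (hh₂ : Integrable h₂) :
    ∀ᵐ x, G0 (fun y => h₁ y + h₂ y) x = G0 h₁ x + G0 h₂ x := by
  have hE : 2 < Module.finrank ℝ ℝ⁴ := by simp
  filter_upwards [ae_integrable_div_norm_sub_sq hE hh₁, ae_integrable_div_norm_sub_sq hE hh₂]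
    with x h₁x h₂x
  simp only [G0, add_div, integral_add h₁x h₂x]
  ring

def resonanceSubmodule (U : ℝ⁴ → ℝ) {v : ℝ⁴ → ℝ} (hv : MemLp v 2 volume) :
    Submodule ℝ (Lp ℝ 2 (volume : Measure ℝ⁴)) where
  carrier := {f | ∀ᵐ x ∂volume, U x * f x + v x * G0 (fun y => v y * f y) x = 0}
  add_mem' {f g} hf hg := by
    have hfg : (fun y => v y * (f + g) y) =ᵐ[volume] fun y => v y * f y + v y * g y := by
      filter_upwards [Lp.coeFn_add f g] with y hy
      rw [hy, Pi.add_apply, mul_add]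
    filter_upwards [hf, hg, Lp.coeFn_add f g,
      G0_add_ae (h₁ := fun y => v y * f y) (h₂ := fun y => v y * g y)
        (hv.integrable_mul (Lp.memLp f)) (hv.integrable_mul (Lp.memLp g))]
      with x hfx hgx hx hG
    rw [G0_congr_ae hfg, hG, hx, Pi.add_apply]
    linear_combination hfx + hgx
  zero_mem' := by simp [G0]
  smul_mem' c f hf := by
    have hcf : (fun y => v y * (c • f) y) =ᵐ[volume] fun y => c * (v y * f y) := by
      filter_upwards [Lp.coeFn_smul c f] with y hy
      rw [hy, Pi.smul_apply, smul_eq_mul]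
      ring
    filter_upwards [hf, Lp.coeFn_smul c f] with x hfx hx
    rw [G0_congr_ae hcf, G0_const_mul, hx, Pi.smul_apply, smul_eq_mul]
    linear_combination c * hfx

theorem stmt_15_general (C ε : ℝ) (hε : 0 < ε)
    (V : EuclideanSpace ℝ (Fin 4) → ℝ) (hVm : Measurable V)
    (hV : ∀ x, |V x| ≤ C * (1 + ‖x‖ ^ 2) ^ (-(4 + ε) / 2))
    (v U : EuclideanSpace ℝ (Fin 4) → ℝ)
    (hv : ∀ x, v x = Real.sqrt |V x|) :
    letI K₁ : Set (Lp ℝ 2 (volume : Measure (EuclideanSpace ℝ (Fin 4)))) :=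
      {f | ∀ᵐ x ∂volume, U x * f x + v x * G0 (fun y => v y * f y) x = 0}
    letI K₂ : Set (Lp ℝ 2 (volume : Measure (EuclideanSpace ℝ (Fin 4)))) :=
      {f | (∀ᵐ x ∂volume, U x * f x + v x * G0 (fun y => v y * f y) x = 0) ∧
        (∫ y, v y * f y) = 0}
    Module.rank ℝ ↥(Submodule.span ℝ K₁) ≤ Module.rank ℝ ↥(Submodule.span ℝ K₂) + 1 := by
  have hv2 : MemLp v 2 volume := by
    rw [funext hv]
    exact Integrable.memLp_two_sqrt_abs <| integrable_of_abs_le_mul_rpow_neg_one_add_norm_sq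
      (by simpa using hε) hVm.aestronglyMeasurable hV
  let W := resonanceSubmodule U hv2
  have hK₂ :
      {f | f ∈ W ∧ ∫ y, v y * f y = 0} = ↑(W ⊓ LinearMap.ker (innerₛₗ ℝ (hv2.toLp v))) := by
    ext f
    exact and_congr Iff.rfl (by rw [integral_mul_eq_inner_toLp hv2]; rfl)
  change Module.rank ℝ (Submodule.span ℝ (W : Set (Lp ℝ 2 (volume : Measure ℝ⁴)))) ≤
    Module.rank ℝ (Submodule.span ℝ {f | f ∈ W ∧ ∫ y, v y * f y = 0}) + 1
  rw [hK₂, W.span_eq, Submodule.span_eq (W ⊓ _)]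
  exact W.rank_le_rank_inf_ker_add_one _

/-- `rank S₁ ≤ rank S₂ + 1`: in `ℝ⁴` with `|V| ≲ ⟨x⟩^{−4−ε}`, the dimension of
`ker T ⊆ L²` (`T = U + vG₀v`, defining `S₁`) exceeds by at most one the dimension of
`ker T ∩ ker P` (`P` the projection onto `v`, defining `S₂`). -/
theorem stmt_15 (C ε : ℝ) (hε : 0 < ε)
    (V : EuclideanSpace ℝ (Fin 4) → ℝ) (hVm : Measurable V)
    (hV : ∀ x, |V x| ≤ C * (1 + ‖x‖ ^ 2) ^ (-(4 + ε) / 2))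
    (v U : EuclideanSpace ℝ (Fin 4) → ℝ)
    (hv : ∀ x, v x = Real.sqrt |V x|)
    (hU : ∀ x, U x = if 0 ≤ V x then 1 else -1) :
    letI K₁ : Set (Lp ℝ 2 (volume : Measure (EuclideanSpace ℝ (Fin 4)))) :=
      {f | ∀ᵐ x ∂volume, U x * f x + v x * G0 (fun y => v y * f y) x = 0}
    letI K₂ : Set (Lp ℝ 2 (volume : Measure (EuclideanSpace ℝ (Fin 4)))) :=
      {f | (∀ᵐ x ∂volume, U x * f x + v x * G0 (fun y => v y * f y) x = 0) ∧
        (∫ y, v y * f y) = 0}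
    Module.rank ℝ ↥(Submodule.span ℝ K₁) ≤ Module.rank ℝ ↥(Submodule.span ℝ K₂) + 1 :=
  stmt_15_general C ε hε V hVm hV v U hv
end
end

section
/- Let t > 2 and r > 0 with r ≳ 1, and let ω : (0,∞) → ℂ satisfy |ω(z)| ≲ (1+z)^{−1/2} and |ω'(z)| ≲ (1+z)^{−3/2}. Then, after one integration by parts, |∫₀^∞ e^{itλ²} λ χ(λ) \tildeχ(λ r) e^{iλr} ω(λ r) r^{−2} dλ| ≲ t⁻¹, where χ is a smooth cutoff to λ ≲ 1 and \tildeχ = 1 − χ₀ is a smooth cutoff to λ r ≳ 1. -/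
open MeasureTheory Real Set

noncomputable def auxF (χ χt : ℝ → ℝ) (ω : ℝ → ℂ) (r l : ℝ) : ℂ :=
  (χ l : ℂ) * (χt (l * r) : ℂ) * Complex.exp (Complex.I * l * r) * ω (l * r) / (r : ℂ) ^ 2

noncomputable def auxF' (χ χt : ℝ → ℝ) (ω ω' : ℝ → ℂ) (r l : ℝ) : ℂ :=
  (((deriv χ l : ℝ) : ℂ) * (χt (l * r) : ℂ) * Complex.exp (Complex.I * l * r) * ω (l * r)
   + (χ l : ℂ) * ((r : ℂ) * ((deriv χt (l * r) : ℝ) : ℂ)) * Complex.exp (Complex.I * l * r) * ω (l * r)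
   + (χ l : ℂ) * (χt (l * r) : ℂ) * (Complex.I * r * Complex.exp (Complex.I * l * r)) * ω (l * r)
   + (χ l : ℂ) * (χt (l * r) : ℂ) * Complex.exp (Complex.I * l * r) * ((r : ℂ) * ω' (l * r)))
   / (r : ℂ) ^ 2

theorem hasDerivAt_auxF (χ χt : ℝ → ℝ) (hχ : ContDiff ℝ (⊤ : ℕ∞) χ) (hχt : ContDiff ℝ (⊤ : ℕ∞) χt)
    (ω ω' : ℝ → ℂ) (r l : ℝ) (hωd : HasDerivAt ω (ω' (l * r)) (l * r)) :
    HasDerivAt (auxF χ χt ω r) (auxF' χ χt ω ω' r l) l := by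
  have d1 : HasDerivAt (fun y : ℝ => ((χ y : ℝ) : ℂ)) ((deriv χ l : ℝ) : ℂ) l :=
    ((hχ.differentiable (by simp) l).hasDerivAt).ofReal_comp
  have dmul : HasDerivAt (fun y : ℝ => y * r) r l := hasDerivAt_mul_const r
  have d2 : HasDerivAt (fun y : ℝ => ((χt (y * r) : ℝ) : ℂ)) ((deriv χt (l * r) * r : ℝ) : ℂ) l := by
    exact (((hχt.differentiable (by simp) (l * r)).hasDerivAt).comp l dmul).ofReal_comp
  have dlin : HasDerivAt (fun y : ℝ => Complex.I * y * r) (Complex.I * r) l := by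
    have h0 : HasDerivAt (fun y : ℝ => ((y : ℝ) : ℂ)) 1 l := (hasDerivAt_id l).ofReal_comp
    simpa using (h0.const_mul Complex.I).mul_const (r : ℂ)
  have d3 : HasDerivAt (fun y : ℝ => Complex.exp (Complex.I * y * r))
      (Complex.exp (Complex.I * l * r) * (Complex.I * r)) l := dlin.cexp
  have d4 : HasDerivAt (fun y : ℝ => ω (y * r)) (r • ω' (l * r)) l := hωd.scomp l dmul
  have := (((d1.mul d2).mul d3).mul d4).div_const ((r : ℂ) ^ 2)
  refine this.congr_deriv ?_
  unfold auxF'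
  push_cast
  simp only [Complex.real_smul, Pi.mul_apply]
  push_cast
  ring

noncomputable def auxH (χ χt : ℝ → ℝ) (ω : ℝ → ℂ) (t r l : ℝ) : ℂ :=
  Complex.exp (Complex.I * t * (l : ℂ) ^ 2) * auxF χ χt ω r l

noncomputable def auxH' (χ χt : ℝ → ℝ) (ω ω' : ℝ → ℂ) (t r l : ℝ) : ℂ :=
  Complex.I * t * (2 * l) * Complex.exp (Complex.I * t * (l : ℂ) ^ 2) * auxF χ χt ω r l
  + Complex.exp (Complex.I * t * (l : ℂ) ^ 2) * auxF' χ χt ω ω' r l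

theorem hasDerivAt_auxH (χ χt : ℝ → ℝ) (hχ : ContDiff ℝ (⊤ : ℕ∞) χ) (hχt : ContDiff ℝ (⊤ : ℕ∞) χt)
    (ω ω' : ℝ → ℂ) (t r l : ℝ) (hωd : HasDerivAt ω (ω' (l * r)) (l * r)) :
    HasDerivAt (auxH χ χt ω t r) (auxH' χ χt ω ω' t r l) l := by
  have dsq : HasDerivAt (fun y : ℝ => ((y : ℂ)) ^ 2) (2 * (l : ℂ)) l := by
    simpa [Complex.ofReal_pow] using (hasDerivAt_pow 2 l).ofReal_comp
  have de1 : HasDerivAt (fun y : ℝ => Complex.exp (Complex.I * t * (y : ℂ) ^ 2))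
      (Complex.exp (Complex.I * t * (l : ℂ) ^ 2) * (Complex.I * t * (2 * l))) l := by
    simpa [mul_assoc] using (dsq.const_mul (Complex.I * t)).cexp
  have := de1.mul (hasDerivAt_auxF χ χt hχ hχt ω ω' r l hωd)
  unfold auxH auxH'
  refine this.congr_deriv ?_
  ring

lemma aux_integrableOn {f : ℝ → ℂ} (hm : AEStronglyMeasurable f (volume.restrict (Ioc 0 1)))
    {K : ℝ} (hb : ∀ x ∈ Ioc (0:ℝ) 1, ‖f x‖ ≤ K) (h0 : ∀ x : ℝ, 1 < x → f x = 0) :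
    IntegrableOn f (Ioi (0:ℝ)) := by
  have h1 : IntegrableOn f (Ioc 0 1) := by
    refine Integrable.mono' (g := fun _ => K) ?_ hm ?_
    · exact integrableOn_const measure_Ioc_lt_top.ne
    · exact (ae_restrict_iff' measurableSet_Ioc).2 (ae_of_all _ hb)
  have h2 : IntegrableOn f (Ioi 1) :=
    integrableOn_zero.congr_fun (fun x hx => (h0 x hx).symm) measurableSet_Ioi
  refine (h1.union h2).mono_set fun x hx => ?_
  rcases le_or_gt x 1 with h | h
  · exact Or.inl ⟨hx, h⟩
  · exact Or.inr h

lemma aux_mul4_le {a b c d : ℂ} {A B C D : ℝ} (h1 : ‖a‖ ≤ A) (h2 : ‖b‖ ≤ B)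
    (h3 : ‖c‖ ≤ C) (h4 : ‖d‖ ≤ D) : ‖a * b * c * d‖ ≤ A * B * C * D := by
  have hA : 0 ≤ A := (norm_nonneg a).trans h1
  have hB : 0 ≤ B := (norm_nonneg b).trans h2
  have hC : 0 ≤ C := (norm_nonneg c).trans h3
  calc ‖a * b * c * d‖ = ‖a‖ * ‖b‖ * ‖c‖ * ‖d‖ := by rw [norm_mul, norm_mul, norm_mul]
    _ ≤ A * B * C * D := by
        refine mul_le_mul (mul_le_mul (mul_le_mul h1 h2 (norm_nonneg b) hA) h3
          (norm_nonneg c) (mul_nonneg hA hB)) h4 (norm_nonneg d) ?_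
        exact mul_nonneg (mul_nonneg hA hB) hC

/-- For `t > 2`, `r ≥ 1`, and `ω` with `|ω(z)| ≲ (1+z)^{−1/2}`, `|ω'(z)| ≲ (1+z)^{−3/2}`:
`|∫₀^∞ e^{itλ²} λ χ(λ) χ̃(λr) e^{iλr} ω(λr) r^{−2} dλ| ≲ t⁻¹`, uniformly in `r ≥ 1`,
`t > 2`, where `χ` cuts off to `λ ≲ 1` and `χ̃` to `λr ≳ 1`. -/
theorem stmt_18 (χ χt : ℝ → ℝ) (hχ : ContDiff ℝ (⊤ : ℕ∞) χ)
    (hχ1 : ∀ x : ℝ, 0 ≤ x → x ≤ 1/2 → χ x = 1) (hχ0 : ∀ x : ℝ, 1 < x → χ x = 0)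
    (hχt : ContDiff ℝ (⊤ : ℕ∞) χt)
    (hχt0 : ∀ z : ℝ, z ≤ 1/4 → χt z = 0) (hχt1 : ∀ z : ℝ, 1/2 ≤ z → χt z = 1)
    (ω ω' : ℝ → ℂ) (hω : ∀ z ∈ Ioi (0:ℝ), HasDerivAt ω (ω' z) z)
    (C₀ : ℝ)
    (hωb : ∀ z : ℝ, 0 < z → ‖ω z‖ ≤ C₀ * (1 + z) ^ (-(1 : ℝ) / 2))
    (hω'b : ∀ z : ℝ, 0 < z → ‖ω' z‖ ≤ C₀ * (1 + z) ^ (-(3 : ℝ) / 2)) :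
    ∃ C : ℝ, ∀ t : ℝ, 2 < t → ∀ r : ℝ, 1 ≤ r →
      ‖∫ l in Ioi (0:ℝ), Complex.exp (Complex.I * t * l ^ 2) * l * χ l * χt (l * r) *
          Complex.exp (Complex.I * l * r) * ω (l * r) / (r : ℂ) ^ 2‖ ≤ C / t := by
  classical
  -- bounds on the cutoffs and their derivatives
  obtain ⟨A₀, hA₀⟩ := (isCompact_Icc (a := (0:ℝ)) (b := 1)).exists_bound_of_continuousOn
    hχ.continuous.continuousOn
  obtain ⟨A₁, hA₁⟩ := (isCompact_Icc (a := (0:ℝ)) (b := 1)).exists_bound_of_continuousOn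
    (hχ.continuous_deriv (by simp)).continuousOn
  obtain ⟨B₀, hB₀⟩ := (isCompact_Icc (a := (0:ℝ)) (b := 1/2)).exists_bound_of_continuousOn
    hχt.continuous.continuousOn
  obtain ⟨B₁, hB₁⟩ := (isCompact_Icc (a := (0:ℝ)) (b := 1/2)).exists_bound_of_continuousOn
    (hχt.continuous_deriv (by simp)).continuousOn
  set A : ℝ := max (max A₀ A₁) 1 with hAdef
  set B : ℝ := max (max B₀ B₁) 1 with hBdef
  have hA1 : (1:ℝ) ≤ A := le_max_right _ _
  have hB1 : (1:ℝ) ≤ B := le_max_right _ _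
  have hA0 : (0:ℝ) ≤ A := by linarith
  have hB0 : (0:ℝ) ≤ B := by linarith
  have hχA : ∀ x ∈ Icc (0:ℝ) 1, |χ x| ≤ A :=
    fun x hx => (hA₀ x hx).trans ((le_max_left _ _).trans (le_max_left _ _))
  have hχ'A : ∀ x ∈ Icc (0:ℝ) 1, |deriv χ x| ≤ A :=
    fun x hx => (hA₁ x hx).trans ((le_max_right _ _).trans (le_max_left _ _))
  have hχt'0 : ∀ z : ℝ, 1/2 < z → deriv χt z = 0 := by
    intro z hz
    have hev : χt =ᶠ[nhds z] fun _ => 1 :=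
      Filter.eventuallyEq_of_mem (Ioi_mem_nhds hz) (fun y hy => hχt1 y (le_of_lt hy))
    rw [hev.deriv_eq]; simp
  have hχtB : ∀ z : ℝ, 0 ≤ z → |χt z| ≤ B := by
    intro z hz
    rcases le_or_gt z (1/2) with h | h
    · exact (hB₀ z ⟨hz, h⟩).trans ((le_max_left _ _).trans (le_max_left _ _))
    · rw [hχt1 z h.le]; simpa using hB1
  have hχt'B : ∀ z : ℝ, 0 ≤ z → |deriv χt z| ≤ B := by
    intro z hz
    rcases le_or_gt z (1/2) with h | h
    · exact (hB₁ z ⟨hz, h⟩).trans ((le_max_right _ _).trans (le_max_left _ _))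
    · rw [hχt'0 z h]; simpa using hB0
  have hχ'0 : ∀ x : ℝ, 1 < x → deriv χ x = 0 := by
    intro x hx
    have hev : χ =ᶠ[nhds x] fun _ => 0 :=
      Filter.eventuallyEq_of_mem (Ioi_mem_nhds hx) (fun y hy => hχ0 y hy)
    rw [hev.deriv_eq]; simp
  have hC₀ : 0 ≤ C₀ := by
    have h := hωb 1 one_pos
    have hp : (0:ℝ) < ((1:ℝ) + 1) ^ (-(1:ℝ)/2) := Real.rpow_pos_of_pos (by norm_num) _
    nlinarith [norm_nonneg (ω 1)]
  have hωC : ∀ z : ℝ, 0 < z → ‖ω z‖ ≤ C₀ := by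
    intro z hz
    have h1 : ((1:ℝ) + z) ^ (-(1:ℝ)/2) ≤ 1 :=
      Real.rpow_le_one_of_one_le_of_nonpos (by linarith) (by norm_num)
    calc ‖ω z‖ ≤ C₀ * (1 + z) ^ (-(1:ℝ)/2) := hωb z hz
      _ ≤ C₀ * 1 := mul_le_mul_of_nonneg_left h1 hC₀
      _ = C₀ := mul_one _
  have hω'C : ∀ z : ℝ, 0 < z → ‖ω' z‖ ≤ C₀ := by
    intro z hz
    have h1 : ((1:ℝ) + z) ^ (-(3:ℝ)/2) ≤ 1 :=
      Real.rpow_le_one_of_one_le_of_nonpos (by linarith) (by norm_num)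
    calc ‖ω' z‖ ≤ C₀ * (1 + z) ^ (-(3:ℝ)/2) := hω'b z hz
      _ ≤ C₀ * 1 := mul_le_mul_of_nonneg_left h1 hC₀
      _ = C₀ := mul_one _
  have hP0 : (0:ℝ) ≤ 4 * A * B * C₀ := by positivity
  refine ⟨4 * A * B * C₀, ?_⟩
  intro t ht r hr
  have hr0 : (0:ℝ) < r := lt_of_lt_of_le one_pos hr
  have ht0 : (0:ℝ) < t := by linarith
  have hrabs : |r| = r := abs_of_pos hr0
  -- norms of oscillating factors
  have hexp : ∀ x : ℝ, ‖Complex.exp (Complex.I * x)‖ = 1 := by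
    intro x
    rw [Complex.norm_exp]
    simp
  have he2 : ∀ l : ℝ, ‖Complex.exp (Complex.I * l * r)‖ = 1 := by
    intro l
    rw [show Complex.I * l * r = Complex.I * ((l * r : ℝ) : ℂ) by push_cast; ring, hexp]
  have he1 : ∀ l : ℝ, ‖Complex.exp (Complex.I * t * (l:ℂ) ^ 2)‖ = 1 := by
    intro l
    rw [show Complex.I * t * (l:ℂ) ^ 2 = Complex.I * ((t * l ^ 2 : ℝ) : ℂ) by push_cast; ring,
      hexp]
  have hcnorm : ∀ x : ℝ, ‖((x:ℝ):ℂ)‖ = |x| := fun x => by simp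
  -- pointwise bound for auxF'
  have hF'bd : ∀ l ∈ Ioc (0:ℝ) 1, ‖auxF' χ χt ω ω' r l‖ ≤ 4 * A * B * C₀ := by
    intro l hl
    have hz : 0 < l * r := mul_pos hl.1 hr0
    have hl01 : l ∈ Icc (0:ℝ) 1 := ⟨hl.1.le, hl.2⟩
    have hb1 : ‖((deriv χ l : ℝ):ℂ)‖ ≤ A := by rw [hcnorm]; exact hχ'A l hl01
    have hb2 : ‖((χ l : ℝ):ℂ)‖ ≤ A := by rw [hcnorm]; exact hχA l hl01
    have hb3 : ‖((χt (l*r) : ℝ):ℂ)‖ ≤ B := by rw [hcnorm]; exact hχtB _ hz.le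
    have hb4 : ‖((r:ℝ):ℂ) * ((deriv χt (l*r) : ℝ):ℂ)‖ ≤ r * B := by
      rw [norm_mul, hcnorm, hcnorm, hrabs]
      exact mul_le_mul_of_nonneg_left (hχt'B _ hz.le) hr0.le
    have hb5 : ‖ω (l*r)‖ ≤ C₀ := hωC _ hz
    have hb6 : ‖Complex.I * r * Complex.exp (Complex.I * l * r)‖ ≤ r := by
      rw [norm_mul, norm_mul, he2, Complex.norm_I, one_mul, mul_one, hcnorm, hrabs]
    have hb7 : ‖((r:ℝ):ℂ) * ω' (l*r)‖ ≤ r * C₀ := by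
      rw [norm_mul, hcnorm, hrabs]
      exact mul_le_mul_of_nonneg_left (hω'C _ hz) hr0.le
    have hb8 : ‖Complex.exp (Complex.I * l * r)‖ ≤ 1 := le_of_eq (he2 l)
    have n1 := aux_mul4_le hb1 hb3 hb8 hb5
    have n2 := aux_mul4_le hb2 hb4 hb8 hb5
    have n3 := aux_mul4_le hb2 hb3 hb6 hb5
    have n4 := aux_mul4_le hb2 hb3 hb8 hb7
    have hrn : ‖((r:ℂ)) ^ 2‖ = r ^ 2 := by
      rw [norm_pow, hcnorm, hrabs]
    unfold auxF'
    rw [norm_div, hrn]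
    have hnum : ‖((deriv χ l : ℝ):ℂ) * ((χt (l*r) : ℝ):ℂ) * Complex.exp (Complex.I * l * r) * ω (l*r)
        + ((χ l : ℝ):ℂ) * (((r:ℝ):ℂ) * ((deriv χt (l*r) : ℝ):ℂ)) * Complex.exp (Complex.I * l * r) * ω (l*r)
        + ((χ l : ℝ):ℂ) * ((χt (l*r) : ℝ):ℂ) * (Complex.I * r * Complex.exp (Complex.I * l * r)) * ω (l*r)
        + ((χ l : ℝ):ℂ) * ((χt (l*r) : ℝ):ℂ) * Complex.exp (Complex.I * l * r) * (((r:ℝ):ℂ) * ω' (l*r))‖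
        ≤ A * B * 1 * C₀ + A * (r * B) * 1 * C₀ + A * B * r * C₀ + A * B * 1 * (r * C₀) := by
      calc _ ≤ ‖_ + _ + _‖ + ‖_‖ := norm_add_le _ _
        _ ≤ ‖_ + _‖ + ‖_‖ + ‖_‖ := by gcongr; exact norm_add_le _ _
        _ ≤ ‖_‖ + ‖_‖ + ‖_‖ + ‖_‖ := by gcongr; exact norm_add_le _ _
        _ ≤ _ := by gcongr
    calc _ ≤ (A * B * 1 * C₀ + A * (r * B) * 1 * C₀ + A * B * r * C₀ + A * B * 1 * (r * C₀)) / r ^ 2 :=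
          (div_le_div_iff_of_pos_right (pow_pos hr0 2)).2 hnum
      _ ≤ 4 * A * B * C₀ := by
          rw [div_le_iff₀ (pow_pos hr0 2)]
          nlinarith [mul_nonneg (mul_nonneg (mul_nonneg hA0 hB0) hC₀)
            (mul_nonneg (by linarith : (0:ℝ) ≤ 4 * r + 1) (by linarith : (0:ℝ) ≤ r - 1))]
  -- pointwise bound for auxF
  have hFbd : ∀ l ∈ Ioc (0:ℝ) 1, ‖auxF χ χt ω r l‖ ≤ A * B * 1 * C₀ := by
    intro l hl
    have hz : 0 < l * r := mul_pos hl.1 hr0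
    have hl01 : l ∈ Icc (0:ℝ) 1 := ⟨hl.1.le, hl.2⟩
    have hb2 : ‖((χ l : ℝ):ℂ)‖ ≤ A := by rw [hcnorm]; exact hχA l hl01
    have hb3 : ‖((χt (l*r) : ℝ):ℂ)‖ ≤ B := by rw [hcnorm]; exact hχtB _ hz.le
    have hb5 : ‖ω (l*r)‖ ≤ C₀ := hωC _ hz
    have hb8 : ‖Complex.exp (Complex.I * l * r)‖ ≤ 1 := le_of_eq (he2 l)
    have hnum := aux_mul4_le hb2 hb3 hb8 hb5
    have hrn : ‖((r:ℂ)) ^ 2‖ = r ^ 2 := by rw [norm_pow, hcnorm, hrabs]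
    unfold auxF
    rw [norm_div, hrn]
    calc _ ≤ (A * B * 1 * C₀) / r ^ 2 := (div_le_div_iff_of_pos_right (pow_pos hr0 2)).2 hnum
      _ ≤ A * B * 1 * C₀ := by
          apply div_le_self (by positivity)
          nlinarith
  -- vanishing past 1
  have hF0 : ∀ x : ℝ, 1 < x → auxF χ χt ω r x = 0 := by
    intro x hx; unfold auxF; rw [hχ0 x hx]; simp
  have hF'0 : ∀ x : ℝ, 1 < x → auxF' χ χt ω ω' r x = 0 := by
    intro x hx; unfold auxF'; rw [hχ0 x hx, hχ'0 x hx]; simp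
  -- measurability
  have hmexp2 : Continuous fun l : ℝ => Complex.exp (Complex.I * l * r) := by
    apply Complex.continuous_exp.comp
    exact ((continuous_const.mul Complex.continuous_ofReal).mul continuous_const)
  have hmexp1 : Continuous fun l : ℝ => Complex.exp (Complex.I * t * (l:ℂ) ^ 2) := by
    apply Complex.continuous_exp.comp
    exact (continuous_const.mul (Complex.continuous_ofReal.pow 2))
  have hmχ : Continuous fun l : ℝ => ((χ l : ℝ):ℂ) :=
    Complex.continuous_ofReal.comp hχ.continuous
  have hmχ' : Continuous fun l : ℝ => ((deriv χ l : ℝ):ℂ) :=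
    Complex.continuous_ofReal.comp (hχ.continuous_deriv (by simp))
  have hmχt : Continuous fun l : ℝ => ((χt (l * r) : ℝ):ℂ) :=
    Complex.continuous_ofReal.comp (hχt.continuous.comp (continuous_id.mul continuous_const))
  have hmχt' : Continuous fun l : ℝ => ((deriv χt (l * r) : ℝ):ℂ) :=
    Complex.continuous_ofReal.comp
      ((hχt.continuous_deriv (by simp)).comp (continuous_id.mul continuous_const))
  have hmω : AEStronglyMeasurable (fun l : ℝ => ω (l * r)) (volume.restrict (Ioc 0 1)) := by
    have : ContinuousOn (fun l : ℝ => ω (l * r)) (Ioc 0 1) := by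
      intro x hx
      have hca : ContinuousAt (fun l : ℝ => l * r) x :=
        (continuous_id.mul continuous_const).continuousAt
      exact (ContinuousAt.comp (g := ω) (f := fun l : ℝ => l * r)
        ((hω (x * r) (mul_pos hx.1 hr0)).continuousAt) hca).continuousWithinAt
    exact this.aestronglyMeasurable measurableSet_Ioc
  have hmω' : AEStronglyMeasurable (fun l : ℝ => ω' (l * r)) (volume.restrict (Ioc 0 1)) := by
    have hmd : Measurable fun l : ℝ => deriv ω (l * r) :=
      (measurable_deriv ω).comp (measurable_id.mul_const r)
    refine hmd.aestronglyMeasurable.congr ?_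
    refine (ae_restrict_iff' measurableSet_Ioc).2 (ae_of_all _ fun x hx => ?_)
    exact (hω (x * r) (mul_pos hx.1 hr0)).deriv
  have hmF : AEStronglyMeasurable (auxF χ χt ω r) (volume.restrict (Ioc 0 1)) := by
    unfold auxF
    simp only [div_eq_mul_inv]
    exact ((((hmχ.aestronglyMeasurable.restrict.mul
      hmχt.aestronglyMeasurable.restrict).mul
      hmexp2.aestronglyMeasurable.restrict).mul hmω).mul_const _)
  have hmF' : AEStronglyMeasurable (auxF' χ χt ω ω' r) (volume.restrict (Ioc 0 1)) := by
    unfold auxF'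
    simp only [div_eq_mul_inv]
    apply AEStronglyMeasurable.mul_const
    refine (((((hmχ'.aestronglyMeasurable.restrict.mul
      hmχt.aestronglyMeasurable.restrict).mul
      hmexp2.aestronglyMeasurable.restrict).mul hmω).add ?_).add ?_).add ?_
    · exact (((hmχ.aestronglyMeasurable.restrict.mul
        ((aestronglyMeasurable_const (b := ((r:ℝ):ℂ))).mul
          hmχt'.aestronglyMeasurable.restrict)).mul
        hmexp2.aestronglyMeasurable.restrict).mul hmω)
    · exact (((hmχ.aestronglyMeasurable.restrict.mul
        hmχt.aestronglyMeasurable.restrict).mul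
        ((continuous_const.mul hmexp2).aestronglyMeasurable.restrict)).mul hmω)
    · exact (((hmχ.aestronglyMeasurable.restrict.mul
        hmχt.aestronglyMeasurable.restrict).mul
        hmexp2.aestronglyMeasurable.restrict).mul
        ((aestronglyMeasurable_const (b := ((r:ℝ):ℂ))).mul hmω'))
  -- integrability of the two pieces
  have hg2int : IntegrableOn
      (fun l : ℝ => Complex.exp (Complex.I * t * (l:ℂ) ^ 2) * auxF' χ χt ω ω' r l)
      (Ioi (0:ℝ)) := by
    refine aux_integrableOn (hmexp1.aestronglyMeasurable.restrict.mul hmF')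
      (K := 4 * A * B * C₀) (fun x hx => ?_) (fun x hx => ?_)
    · rw [norm_mul, he1, one_mul]; exact hF'bd x hx
    · rw [hF'0 x hx, mul_zero]
  have hg1int : IntegrableOn
      (fun l : ℝ => Complex.I * t * (2 * l) * Complex.exp (Complex.I * t * (l:ℂ) ^ 2)
        * auxF χ χt ω r l) (Ioi (0:ℝ)) := by
    refine aux_integrableOn (K := 2 * t * (A * B * 1 * C₀)) ?_ (fun x hx => ?_) (fun x hx => ?_)
    · exact ((((continuous_const.mul
        (continuous_const.mul Complex.continuous_ofReal)).mul
        hmexp1).aestronglyMeasurable.restrict).mul hmF)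
    · have h1 : ‖Complex.I * t * (2 * (x:ℂ)) * Complex.exp (Complex.I * t * (x:ℂ) ^ 2)‖ ≤ 2 * t := by
        have h2x : ‖2 * (x:ℂ)‖ ≤ 2 := by
          rw [show (2:ℂ) * (x:ℂ) = ((2 * x : ℝ):ℂ) by push_cast; ring, hcnorm]
          rw [abs_of_pos (by linarith [hx.1] : (0:ℝ) < 2 * x)]
          linarith [hx.2]
        rw [norm_mul, he1, mul_one, norm_mul, norm_mul, Complex.norm_I, one_mul, hcnorm,
          abs_of_pos ht0]
        calc t * ‖2 * (x:ℂ)‖ ≤ t * 2 := mul_le_mul_of_nonneg_left h2x ht0.le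
          _ = 2 * t := by ring
      calc ‖_‖ ≤ (2 * t) * (A * B * 1 * C₀) := by
            rw [norm_mul]
            exact mul_le_mul h1 (hFbd x hx) (norm_nonneg _) (by positivity)
        _ = 2 * t * (A * B * 1 * C₀) := by ring
    · rw [hF0 x hx, mul_zero]
  have hH'int : IntegrableOn (auxH' χ χt ω ω' t r) (Ioi (0:ℝ)) := by
    unfold auxH'
    exact hg1int.add hg2int
  -- H vanishes near 0 and past 1
  have hHz : ∀ x : ℝ, x < 1/(4*r) → auxH χ χt ω t r x = 0 := by
    intro x hx
    have hxr : x * r < 1/4 := by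
      rw [lt_div_iff₀ (by positivity : (0:ℝ) < 4 * r)] at hx
      nlinarith
    unfold auxH auxF
    rw [hχt0 (x * r) hxr.le]
    simp
  have hHc : ContinuousWithinAt (auxH χ χt ω t r) (Ici 0) 0 := by
    have hev : auxH χ χt ω t r =ᶠ[nhds (0:ℝ)] fun _ => 0 :=
      Filter.eventuallyEq_of_mem (Iio_mem_nhds (by positivity : (0:ℝ) < 1/(4*r))) hHz
    exact (continuousAt_const.congr hev.symm).continuousWithinAt
  have hH0 : auxH χ χt ω t r 0 = 0 := hHz 0 (by positivity)
  have hHtop : Filter.Tendsto (auxH χ χt ω t r) Filter.atTop (nhds 0) := by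
    refine Filter.Tendsto.congr' ?_ tendsto_const_nhds
    filter_upwards [Filter.eventually_gt_atTop 1] with x hx
    unfold auxH
    rw [hF0 x hx, mul_zero]
  have hHderiv : ∀ x ∈ Ioi (0:ℝ), HasDerivAt (auxH χ χt ω t r) (auxH' χ χt ω ω' t r x) x :=
    fun x hx => hasDerivAt_auxH χ χt hχ hχt ω ω' t r x (hω (x * r) (mul_pos hx hr0))
  have hFTC : ∫ x in Ioi (0:ℝ), auxH' χ χt ω ω' t r x = 0 :=
    by rw [integral_Ioi_of_hasDerivAt_of_tendsto hHc hHderiv hH'int hHtop, hH0, sub_zero]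
  -- rewrite the integrand
  have h2it : (2 * Complex.I * (t:ℂ)) ≠ 0 :=
    mul_ne_zero (mul_ne_zero two_ne_zero Complex.I_ne_zero) (Complex.ofReal_ne_zero.2 ht0.ne')
  have hrepr : ∀ l : ℝ, Complex.exp (Complex.I * t * l ^ 2) * l * χ l * χt (l * r) *
      Complex.exp (Complex.I * l * r) * ω (l * r) / (r : ℂ) ^ 2 =
      (auxH' χ χt ω ω' t r l - Complex.exp (Complex.I * t * (l:ℂ) ^ 2) * auxF' χ χt ω ω' r l)
        • (2 * Complex.I * (t:ℂ))⁻¹ := by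
    intro l
    rw [smul_eq_mul, eq_mul_inv_iff_mul_eq₀ h2it]
    unfold auxH' auxF auxF'
    field_simp
    ring
  rw [show (fun l : ℝ => Complex.exp (Complex.I * t * l ^ 2) * l * χ l * χt (l * r) *
      Complex.exp (Complex.I * l * r) * ω (l * r) / (r : ℂ) ^ 2) =
      (fun l : ℝ => (auxH' χ χt ω ω' t r l
        - Complex.exp (Complex.I * t * (l:ℂ) ^ 2) * auxF' χ χt ω ω' r l)
        • (2 * Complex.I * (t:ℂ))⁻¹) from funext hrepr]
  rw [integral_smul_const, integral_sub hH'int hg2int, hFTC, zero_sub]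
  rw [norm_smul, norm_neg, norm_inv]
  have hnt : ‖2 * Complex.I * (t:ℂ)‖ = 2 * t := by
    rw [norm_mul, norm_mul, Complex.norm_I, hcnorm, abs_of_pos ht0]
    norm_num
  rw [hnt]
  -- bound the remaining integral
  have hJ : ‖∫ l in Ioi (0:ℝ), Complex.exp (Complex.I * t * (l:ℂ) ^ 2)
      * auxF' χ χt ω ω' r l‖ ≤ 4 * A * B * C₀ := by
    have hsplit : Ioi (0:ℝ) = Ioc 0 1 ∪ Ioi 1 := (Ioc_union_Ioi_eq_Ioi zero_le_one).symm
    rw [hsplit, setIntegral_union (Ioc_disjoint_Ioi le_rfl) measurableSet_Ioi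
      (hg2int.mono_set (by rw [hsplit]; exact subset_union_left))
      (hg2int.mono_set (by rw [hsplit]; exact subset_union_right))]
    have hzero : ∫ l in Ioi (1:ℝ), Complex.exp (Complex.I * t * (l:ℂ) ^ 2)
        * auxF' χ χt ω ω' r l = 0 := by
      refine setIntegral_eq_zero_of_forall_eq_zero fun x hx => ?_
      rw [hF'0 x hx, mul_zero]
    rw [hzero, add_zero]
    have := norm_setIntegral_le_of_norm_le_const (μ := volume) (s := Ioc (0:ℝ) 1)
      (f := fun l : ℝ => Complex.exp (Complex.I * t * (l:ℂ) ^ 2) * auxF' χ χt ω ω' r l)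
      measure_Ioc_lt_top (C := 4 * A * B * C₀)
      (fun x hx => by rw [norm_mul, he1, one_mul]; exact hF'bd x hx)
    have hvol : volume.real (Ioc (0:ℝ) 1) = 1 := by
      rw [Real.volume_real_Ioc]
      norm_num
    rw [hvol, mul_one] at this
    exact this
  calc ‖∫ l in Ioi (0:ℝ), Complex.exp (Complex.I * t * (l:ℂ) ^ 2)
        * auxF' χ χt ω ω' r l‖ * (2 * t)⁻¹
      ≤ (4 * A * B * C₀) * (2 * t)⁻¹ :=
        mul_le_mul_of_nonneg_right hJ (by positivity)
    _ ≤ (4 * A * B * C₀) / t := by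
        rw [div_eq_mul_inv]
        refine mul_le_mul_of_nonneg_left ?_ hP0
        exact inv_anti₀ ht0 (by linarith)
end
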